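/- arXiv:2505.11284 — 6 statements merged into one kernel-verified Lean document; each statement's English description precedes it below -/
import Mathlib

section
/- Let a, b ∈ ℕ with b even and b ≤ 2a. Then there exists ε > 0, depending only on b, such that for every smooth function α : (-1,1) → [0,1], every τ > 0, and every horizontal curve ω : [0,τ] → M with ω(0) = (0,-ε,0), ω(τ) = (0,ε,0) and sub-Riemannian length L(ω) ≤ 2ε, one has ω₁(t)·ω₂(t)^{b/2} = 0 for every t ∈ [0,τ]; that is, any competing curve of length at most 2ε is a reparametrization of γ restricted to [-ε,ε]. -/
open Set MeasureTheory

private lemma key_b (X Y θ : ℝ) (hθ0 : 0 ≤ θ) (hθ1 : θ ≤ 1) :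
    θ * |X| + (1 - θ ^ 2) * |Y| ≤ Real.sqrt (X ^ 2 + Y ^ 2) := by
  have h1 : (0:ℝ) ≤ 1 - θ ^ 2 := by nlinarith
  have hL : 0 ≤ θ * |X| + (1 - θ ^ 2) * |Y| :=
    add_nonneg (mul_nonneg hθ0 (abs_nonneg X)) (mul_nonneg h1 (abs_nonneg Y))
  refine (Real.le_sqrt hL (by positivity)).2 ?_
  nlinarith [mul_nonneg h1 (sq_nonneg (|X| - θ * |Y|)), sq_nonneg (θ * |Y|), sq_abs X, sq_abs Y]

private lemma key_a (X Y S : ℝ) (hS : |S| ≤ 1 / 2) :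
    Real.sqrt (X ^ 2 + Y ^ 2) ≤ Real.sqrt (X ^ 2 + (1 - S) * Y ^ 2) + 3 / 2 * |S| * |Y| := by
  obtain ⟨hS1, hS2⟩ := abs_le.1 hS
  have harg : 0 ≤ X ^ 2 + (1 - S) * Y ^ 2 := by nlinarith [sq_nonneg X, sq_nonneg Y]
  set R := Real.sqrt (X ^ 2 + (1 - S) * Y ^ 2) with hRdef
  have hR0 : 0 ≤ R := Real.sqrt_nonneg _
  have hR2 : R ^ 2 = X ^ 2 + (1 - S) * Y ^ 2 := Real.sq_sqrt harg
  have hY2 : Y ^ 2 ≤ 2 * R ^ 2 := by nlinarith [sq_nonneg X, sq_nonneg Y]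
  have hYR : |Y| ≤ 3 * R := by
    calc |Y| = Real.sqrt (Y ^ 2) := (Real.sqrt_sq_eq_abs Y).symm
    _ ≤ Real.sqrt ((3 * R) ^ 2) := Real.sqrt_le_sqrt (by nlinarith)
    _ = 3 * R := Real.sqrt_sq (by positivity)
  rw [Real.sqrt_le_iff]
  refine ⟨by positivity, ?_⟩
  nlinarith [mul_le_mul_of_nonneg_left hYR (mul_nonneg (abs_nonneg S) (abs_nonneg Y)),
    mul_le_mul_of_nonneg_right (le_abs_self S) (sq_nonneg Y), sq_abs Y, sq_abs S,
    mul_nonneg (mul_nonneg (abs_nonneg S) (abs_nonneg Y)) hR0, sq_nonneg (S * Y)]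

private lemma key (X Y S c l θ : ℝ) (hSc : |S| ≤ c) (hS : |S| ≤ 1 / 2)
    (hθ0 : 0 ≤ θ) (hθ1 : θ ≤ 1) (hl : 0 < l) :
    θ * |X| + (1 - θ ^ 2) * |Y| - 3 / 4 * (l + c ^ 2 / l) * |Y|
      ≤ Real.sqrt (X ^ 2 + (1 - S) * Y ^ 2) := by
  have h1 := key_b X Y θ hθ0 hθ1
  have h2 := key_a X Y S hS
  have hc0 : 0 ≤ c := le_trans (abs_nonneg S) hSc
  have h3 : 3 / 2 * |S| * |Y| ≤ 3 / 4 * (l + c ^ 2 / l) * |Y| := by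
    have hsc : 3 / 2 * |S| ≤ 3 / 4 * (l + c ^ 2 / l) := by
      have he : 3 / 4 * (l + c ^ 2 / l) = 3 / 4 * (l ^ 2 + c ^ 2) / l := by
        field_simp
      rw [he, le_div_iff₀ hl]
      nlinarith [sq_nonneg (l - c)]
    exact mul_le_mul_of_nonneg_right hsc (abs_nonneg Y)
  linarith

set_option maxHeartbeats 1000000 in
/-- **Statement 0.** For `b` even, there exists `ε > 0` (depending only on `b`) such that
for every `a` with `b ≤ 2a`, every smooth `α : (-1,1) → [0,1]`, and every horizontal curve
`ω : [0,τ] → M` joining `(0,-ε,0)` to `(0,ε,0)`, if the sub-Riemannian length of `ω` is at most `2ε`, then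
`ω₁(t)·ω₂(t)^(b/2) = 0` for every `t`, i.e. `ω` is a reparametrization of `γ|[-ε,ε]`.  Here `M = (-1/2,1/2) × (-1,1) × ℝ`, horizontality means
`ω₃' = ψ(ω)·ω₂'` with `ψ(x) = x₁²x₂^b`, the curve is encoded by its (integrable)
controls `u₁ = ω₁'`, `u₂ = ω₂'`, and the length is
`∫₀^τ √(u₁² + φ(ω)·u₂²)` with `φ(x) = 1 - α(x₂)x₁x₂^a`. -/
theorem statement1 :
    ∀ b : ℕ, Even b →
    ∃ ε : ℝ, 0 < ε ∧
      ∀ a : ℕ, b ≤ 2 * a →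
      ∀ α : ℝ → ℝ, ContDiffOn ℝ (⊤ : ℕ∞) α (Ioo (-1 : ℝ) 1) →
        (∀ s ∈ Ioo (-1 : ℝ) 1, α s ∈ Icc (0 : ℝ) 1) →
      ∀ τ : ℝ, 0 < τ →
      ∀ ω₁ ω₂ ω₃ u₁ u₂ : ℝ → ℝ,
        IntervalIntegrable u₁ volume 0 τ →
        IntervalIntegrable u₂ volume 0 τ →
        IntervalIntegrable (fun s => (ω₁ s) ^ 2 * (ω₂ s) ^ b * u₂ s) volume 0 τ →
        (∀ t ∈ Icc (0 : ℝ) τ,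
          ω₁ t ∈ Ioo (-(1/2) : ℝ) (1/2) ∧ ω₂ t ∈ Ioo (-1 : ℝ) 1) →
        (∀ t ∈ Icc (0 : ℝ) τ, ω₁ t = ω₁ 0 + ∫ s in (0 : ℝ)..t, u₁ s) →
        (∀ t ∈ Icc (0 : ℝ) τ, ω₂ t = ω₂ 0 + ∫ s in (0 : ℝ)..t, u₂ s) →
        (∀ t ∈ Icc (0 : ℝ) τ,
          ω₃ t = ω₃ 0 + ∫ s in (0 : ℝ)..t, (ω₁ s) ^ 2 * (ω₂ s) ^ b * u₂ s) →
        ω₁ 0 = 0 → ω₂ 0 = -ε → ω₃ 0 = 0 →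
        ω₁ τ = 0 → ω₂ τ = ε → ω₃ τ = 0 →
        (∫ t in (0 : ℝ)..τ,
          Real.sqrt ((u₁ t) ^ 2 +
            (1 - α (ω₂ t) * ω₁ t * (ω₂ t) ^ a) * (u₂ t) ^ 2)) ≤ 2 * ε →
        ∀ t ∈ Icc (0 : ℝ) τ, ω₁ t * (ω₂ t) ^ (b / 2) = 0 := by
  intro b hb
  refine ⟨1/100, by norm_num, ?_⟩
  intro a hba α hαs hα01 τ hτ ω₁ ω₂ ω₃ u₁ u₂ hu₁ hu₂ hg hmem hω₁ hω₂ hω₃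
    h10 h20 h30 h1τ h2τ h3τ hL
  obtain ⟨k, hk⟩ := hb
  have hka : k ≤ a := by omega
  have hbk : b / 2 = k := by omega
  have hτ0 : (0:ℝ) ≤ τ := hτ.le
  have huIcc : uIcc (0:ℝ) τ = Icc 0 τ := uIcc_of_le hτ0
  set W₁ : ℝ → ℝ := fun t => ∫ s in (0:ℝ)..t, u₁ s with hW₁def
  set W₂ : ℝ → ℝ := fun t => -(1/100) + ∫ s in (0:ℝ)..t, u₂ s with hW₂def
  have hEq₁ : ∀ t ∈ Icc (0:ℝ) τ, ω₁ t = W₁ t := fun t ht => by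
    rw [hω₁ t ht, h10, zero_add]
  have hEq₂ : ∀ t ∈ Icc (0:ℝ) τ, ω₂ t = W₂ t := fun t ht => by
    rw [hω₂ t ht, h20]
  -- continuity of primitives
  have hW₁c : ContinuousOn W₁ (Icc 0 τ) := by
    have h := intervalIntegral.continuousOn_primitive_interval
      (a := (0:ℝ)) (b := τ) (μ := volume) (f := u₁)
      (by rw [huIcc]
          exact (intervalIntegrable_iff_integrableOn_Icc_of_le hτ0).1 hu₁)
    rwa [huIcc] at h
  have hW₂c : ContinuousOn W₂ (Icc 0 τ) := by
    apply continuousOn_const.add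
    have h := intervalIntegral.continuousOn_primitive_interval
      (a := (0:ℝ)) (b := τ) (μ := volume) (f := u₂)
      (by rw [huIcc]
          exact (intervalIntegrable_iff_integrableOn_Icc_of_le hτ0).1 hu₂)
    rwa [huIcc] at h
  have hmemW : ∀ t ∈ Icc (0:ℝ) τ, |W₁ t| < 1/2 ∧ |W₂ t| < 1 := by
    intro t ht
    obtain ⟨h1, h2⟩ := hmem t ht
    constructor
    · rw [← hEq₁ t ht, abs_lt]; exact ⟨h1.1, h1.2⟩
    · rw [← hEq₂ t ht, abs_lt]; exact ⟨h2.1, h2.2⟩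
  -- bounds on the s-term
  have hsb : ∀ t ∈ Icc (0:ℝ) τ,
      |α (W₂ t) * W₁ t * W₂ t ^ a| ≤ |W₁ t * W₂ t ^ k| ∧
      |W₁ t * W₂ t ^ k| ≤ |W₁ t| := by
    intro t ht
    obtain ⟨h1, h2⟩ := hmemW t ht
    have hW₂Ioo : W₂ t ∈ Ioo (-1:ℝ) 1 := by
      rw [← hEq₂ t ht]; exact (hmem t ht).2
    have hα' := hα01 (W₂ t) hW₂Ioo
    have h2a : |W₂ t| ^ a ≤ |W₂ t| ^ k :=
      pow_le_pow_of_le_one (abs_nonneg _) h2.le hka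
    have h2k : |W₂ t| ^ k ≤ 1 := pow_le_one₀ (abs_nonneg _) h2.le
    have hαabs : |α (W₂ t)| ≤ 1 := abs_le.2 ⟨by linarith [hα'.1], hα'.2⟩
    constructor
    · rw [abs_mul, abs_mul, abs_mul, abs_pow, abs_pow]
      calc |α (W₂ t)| * |W₁ t| * |W₂ t| ^ a ≤ 1 * |W₁ t| * |W₂ t| ^ k := by
            gcongr
      _ = |W₁ t| * |W₂ t| ^ k := by ring
    · rw [abs_mul, abs_pow]
      calc |W₁ t| * |W₂ t| ^ k ≤ |W₁ t| * 1 := by gcongr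
      _ = |W₁ t| := mul_one _
  have hshalf : ∀ t ∈ Icc (0:ℝ) τ, |α (W₂ t) * W₁ t * W₂ t ^ a| ≤ 1/2 := by
    intro t ht
    exact le_trans ((hsb t ht).1.trans (hsb t ht).2) (hmemW t ht).1.le
  -- the sqrt integrand, W-form
  set Sq : ℝ → ℝ := fun t =>
    Real.sqrt ((u₁ t) ^ 2 + (1 - α (W₂ t) * W₁ t * W₂ t ^ a) * (u₂ t) ^ 2) with hSqdef
  have hLW : (∫ t in (0:ℝ)..τ, Sq t) ≤ 2 * (1/100) := by
    have he : EqOn (fun t => Real.sqrt ((u₁ t) ^ 2 +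
        (1 - α (ω₂ t) * ω₁ t * (ω₂ t) ^ a) * (u₂ t) ^ 2)) Sq (uIcc (0:ℝ) τ) := by
      intro t ht
      rw [huIcc] at ht
      simp only [hSqdef, hEq₁ t ht, hEq₂ t ht]
    rw [← intervalIntegral.integral_congr he]
    exact hL
  -- the cubic constraint, W-form
  have hfceq : EqOn (fun s => (ω₁ s) ^ 2 * (ω₂ s) ^ b * u₂ s)
      (fun s => (W₁ s * W₂ s ^ k) ^ 2 * u₂ s) (uIcc (0:ℝ) τ) := by
    intro s hs
    rw [huIcc] at hs
    simp only [hEq₁ s hs, hEq₂ s hs, hk, pow_add]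
    ring
  have hgW : (∫ t in (0:ℝ)..τ, (W₁ t * W₂ t ^ k) ^ 2 * u₂ t) = 0 := by
    rw [← intervalIntegral.integral_congr hfceq]
    have h := hω₃ τ ⟨hτ0, le_rfl⟩
    rw [h3τ, h30, zero_add] at h
    exact h.symm
  -- integrability facts
  have hfc2 : ContinuousOn (fun t => (W₁ t * W₂ t ^ k) ^ 2) (uIcc (0:ℝ) τ) := by
    rw [huIcc]; exact (hW₁c.mul (hW₂c.pow k)).pow 2
  have hIf2u : IntervalIntegrable (fun t => (W₁ t * W₂ t ^ k) ^ 2 * u₂ t) volume 0 τ :=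
    hu₂.continuousOn_mul hfc2
  have hIf2uabs : IntervalIntegrable (fun t => (W₁ t * W₂ t ^ k) ^ 2 * |u₂ t|) volume 0 τ :=
    hu₂.abs.continuousOn_mul hfc2
  have hφc : ContinuousOn (fun t => 1 - α (W₂ t) * W₁ t * W₂ t ^ a) (Icc (0:ℝ) τ) := by
    apply continuousOn_const.sub
    have hmaps : MapsTo W₂ (Icc (0:ℝ) τ) (Ioo (-1:ℝ) 1) := by
      intro t ht
      rw [← hEq₂ t ht]; exact (hmem t ht).2
    exact ((hαs.continuousOn.comp hW₂c hmaps).mul hW₁c).mul (hW₂c.pow a)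
  have hSqInt : IntervalIntegrable Sq volume 0 τ := by
    rw [intervalIntegrable_iff_integrableOn_Ioc_of_le hτ0]
    have hu₁' : IntegrableOn u₁ (Ioc 0 τ) volume :=
      (intervalIntegrable_iff_integrableOn_Ioc_of_le hτ0).1 hu₁
    have hu₂' : IntegrableOn u₂ (Ioc 0 τ) volume :=
      (intervalIntegrable_iff_integrableOn_Ioc_of_le hτ0).1 hu₂
    have hmφ : AEStronglyMeasurable (fun t => 1 - α (W₂ t) * W₁ t * W₂ t ^ a)
        (volume.restrict (Ioc 0 τ)) :=
      (hφc.aestronglyMeasurable measurableSet_Icc).mono_measure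
        (Measure.restrict_mono Ioc_subset_Icc_self le_rfl)
    have harg : AEStronglyMeasurable
        (fun t => (u₁ t) ^ 2 + (1 - α (W₂ t) * W₁ t * W₂ t ^ a) * (u₂ t) ^ 2)
        (volume.restrict (Ioc 0 τ)) := by
      simp only [pow_two]
      exact (hu₁'.1.mul hu₁'.1).add (hmφ.mul (hu₂'.1.mul hu₂'.1))
    have hms : AEStronglyMeasurable Sq (volume.restrict (Ioc 0 τ)) :=
      Real.continuous_sqrt.comp_aestronglyMeasurable harg
    apply Integrable.mono' (g := fun t => |u₁ t| + 2 * |u₂ t|)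
      (hu₁'.abs.add ((hu₂'.abs).const_mul 2)) hms
    filter_upwards [ae_restrict_mem measurableSet_Ioc] with t ht
    have ht' : t ∈ Icc (0:ℝ) τ := Ioc_subset_Icc_self ht
    have hs2 := hshalf t ht'
    obtain ⟨hsl, hsr⟩ := abs_le.1 hs2
    rw [Real.norm_eq_abs, abs_of_nonneg (Real.sqrt_nonneg _)]
    apply Real.sqrt_le_iff.2
    refine ⟨by positivity, ?_⟩
    nlinarith [sq_nonneg (u₂ t), sq_nonneg (u₁ t), sq_abs (u₁ t), sq_abs (u₂ t),
      mul_nonneg (abs_nonneg (u₁ t)) (abs_nonneg (u₂ t))]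
  -- abbreviations
  set A : ℝ := ∫ t in (0:ℝ)..τ, |u₁ t| with hAdef
  set B : ℝ := ∫ t in (0:ℝ)..τ, |u₂ t| with hBdef
  have hA0 : 0 ≤ A := intervalIntegral.integral_nonneg hτ0 (fun t _ => abs_nonneg _)
  have hintu₂ : (∫ s in (0:ℝ)..τ, u₂ s) = 1/50 := by
    have h := hω₂ τ ⟨hτ0, le_rfl⟩
    rw [h20, h2τ] at h
    linarith
  have hB : 1/50 ≤ B := by
    have h := intervalIntegral.abs_integral_le_integral_abs (f := u₂) (μ := volume) hτ0
    rw [hintu₂] at h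
    have habs : |(1:ℝ)/50| = 1/50 := abs_of_nonneg (by norm_num)
    rw [habs] at h
    exact h
  -- pointwise square-root lower bound ingredients
  have hA2 : A ≤ 2 * (1/100) := by
    have hstep : A ≤ ∫ t in (0:ℝ)..τ, Sq t := by
      apply intervalIntegral.integral_mono_on hτ0 hu₁.abs hSqInt
      intro t ht
      have hs2 := hshalf t ht
      obtain ⟨hsl, hsr⟩ := abs_le.1 hs2
      calc |u₁ t| = Real.sqrt ((u₁ t) ^ 2) := (Real.sqrt_sq_eq_abs _).symm
      _ ≤ Sq t := Real.sqrt_le_sqrt (by nlinarith [sq_nonneg (u₂ t)])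
    linarith
  have hW₁A : ∀ t ∈ Icc (0:ℝ) τ, |W₁ t| ≤ A / 2 := by
    intro t ht
    have hsub1 : uIcc (0:ℝ) t ⊆ uIcc (0:ℝ) τ := by
      rw [uIcc_of_le ht.1, huIcc]; exact Icc_subset_Icc le_rfl ht.2
    have hsub2 : uIcc t τ ⊆ uIcc (0:ℝ) τ := by
      rw [uIcc_of_le ht.2, huIcc]; exact Icc_subset_Icc ht.1 le_rfl
    have h0t : IntervalIntegrable u₁ volume 0 t := hu₁.mono_set hsub1
    have htτ : IntervalIntegrable u₁ volume t τ := hu₁.mono_set hsub2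
    have h0t' : IntervalIntegrable (fun s => |u₁ s|) volume 0 t := hu₁.abs.mono_set hsub1
    have htτ' : IntervalIntegrable (fun s => |u₁ s|) volume t τ := hu₁.abs.mono_set hsub2
    have e1 : |W₁ t| ≤ ∫ s in (0:ℝ)..t, |u₁ s| :=
      intervalIntegral.abs_integral_le_integral_abs ht.1
    have eadd : W₁ t + (∫ s in t..τ, u₁ s) = W₁ τ :=
      intervalIntegral.integral_add_adjacent_intervals h0t htτ
    have hWτ : W₁ τ = 0 := (hEq₁ τ ⟨hτ0, le_rfl⟩).symm.trans h1τ
    have e2 : |W₁ t| ≤ ∫ s in t..τ, |u₁ s| := by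
      have hWneg : W₁ t = -(∫ s in t..τ, u₁ s) := by rw [hWτ] at eadd; linarith
      rw [hWneg, abs_neg]
      exact intervalIntegral.abs_integral_le_integral_abs ht.2
    have eA : (∫ s in (0:ℝ)..t, |u₁ s|) + (∫ s in t..τ, |u₁ s|) = A :=
      intervalIntegral.integral_add_adjacent_intervals h0t' htτ'
    linarith
  -- main case split
  rcases eq_or_lt_of_le hA0 with hA | hA
  · intro t ht
    have hz : ω₁ t = 0 := by
      rw [hEq₁ t ht]
      have h := hW₁A t ht
      rw [← hA] at h
      simpa using abs_eq_zero.1 (le_antisymm (by simpa using h) (abs_nonneg _))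
    rw [hz, zero_mul]
  · exfalso
    set T : ℝ := ∫ t in (0:ℝ)..τ, (W₁ t * W₂ t ^ k) ^ 2 * |u₂ t| with hTdef
    have hT0 : 0 ≤ T := intervalIntegral.integral_nonneg hτ0
      (fun t _ => mul_nonneg (sq_nonneg _) (abs_nonneg _))
    -- bound on T from the horizontality constraint
    have hIsub : IntervalIntegrable (fun t => (W₁ t * W₂ t ^ k) ^ 2 * (|u₂ t| - u₂ t))
        volume 0 τ := (hu₂.abs.sub hu₂).continuousOn_mul hfc2
    have hTle : T ≤ A ^ 2 / 4 * (B - 1/50) := by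
      have h1 : T = (∫ t in (0:ℝ)..τ, (W₁ t * W₂ t ^ k) ^ 2 * (|u₂ t| - u₂ t)) +
          ∫ t in (0:ℝ)..τ, (W₁ t * W₂ t ^ k) ^ 2 * u₂ t := by
        rw [← intervalIntegral.integral_add hIsub hIf2u, hTdef]
        congr 1
        ext t
        ring
      rw [hgW, add_zero] at h1
      have h2 : (∫ t in (0:ℝ)..τ, (W₁ t * W₂ t ^ k) ^ 2 * (|u₂ t| - u₂ t)) ≤
          ∫ t in (0:ℝ)..τ, A ^ 2 / 4 * (|u₂ t| - u₂ t) := by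
        apply intervalIntegral.integral_mono_on hτ0 hIsub ((hu₂.abs.sub hu₂).const_mul _)
        intro t ht
        have hf : |W₁ t * W₂ t ^ k| ≤ A / 2 := le_trans (hsb t ht).2 (hW₁A t ht)
        have hfsq : (W₁ t * W₂ t ^ k) ^ 2 ≤ A ^ 2 / 4 := by
          rw [← sq_abs]
          nlinarith [abs_nonneg (W₁ t * W₂ t ^ k)]
        have h0 : 0 ≤ |u₂ t| - u₂ t := by linarith [le_abs_self (u₂ t)]
        exact mul_le_mul_of_nonneg_right hfsq h0
      have h3 : (∫ t in (0:ℝ)..τ, A ^ 2 / 4 * (|u₂ t| - u₂ t)) = A ^ 2 / 4 * (B - 1/50) := by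
        rw [intervalIntegral.integral_const_mul, intervalIntegral.integral_sub hu₂.abs hu₂,
          hintu₂]
      linarith
    -- the master integral inequality
    set θ : ℝ := 50 * A / 3 with hθdef
    have hθ0 : 0 ≤ θ := by positivity
    have hθ1 : θ ≤ 1 := by rw [hθdef]; linarith
    set c₂ : ℝ := 1 - θ ^ 2 - 3 / 4 * A ^ 2 with hc₂def
    set c₃ : ℝ := -(3 / (4 * A ^ 2)) with hc₃def
    have hGint : IntervalIntegrable
        (fun t => θ * |u₁ t| + (c₂ * |u₂ t| + c₃ * ((W₁ t * W₂ t ^ k) ^ 2 * |u₂ t|)))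
        volume 0 τ :=
      (hu₁.abs.const_mul θ).add ((hu₂.abs.const_mul c₂).add (hIf2uabs.const_mul c₃))
    have hGle : (∫ t in (0:ℝ)..τ,
        (θ * |u₁ t| + (c₂ * |u₂ t| + c₃ * ((W₁ t * W₂ t ^ k) ^ 2 * |u₂ t|)))) ≤
        ∫ t in (0:ℝ)..τ, Sq t := by
      apply intervalIntegral.integral_mono_on hτ0 hGint hSqInt
      intro t ht
      have hkey := key (u₁ t) (u₂ t) (α (W₂ t) * W₁ t * W₂ t ^ a) |W₁ t * W₂ t ^ k|
        (A ^ 2) θ (hsb t ht).1 (hshalf t ht) hθ0 hθ1 (by positivity)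
      rw [sq_abs] at hkey
      have hA2ne : (A:ℝ) ^ 2 ≠ 0 := by positivity
      have heq : θ * |u₁ t| + (c₂ * |u₂ t| + c₃ * ((W₁ t * W₂ t ^ k) ^ 2 * |u₂ t|)) =
          θ * |u₁ t| + (1 - θ ^ 2) * |u₂ t| -
            3 / 4 * (A ^ 2 + (W₁ t * W₂ t ^ k) ^ 2 / A ^ 2) * |u₂ t| := by
        rw [hc₂def, hc₃def]
        field_simp
        ring
      rw [heq]
      exact hkey
    have hGeq : (∫ t in (0:ℝ)..τ,
        (θ * |u₁ t| + (c₂ * |u₂ t| + c₃ * ((W₁ t * W₂ t ^ k) ^ 2 * |u₂ t|)))) =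
        θ * A + (c₂ * B + c₃ * T) := by
      rw [intervalIntegral.integral_add (hu₁.abs.const_mul θ)
        ((hu₂.abs.const_mul c₂).add (hIf2uabs.const_mul c₃)),
        intervalIntegral.integral_add (hu₂.abs.const_mul c₂) (hIf2uabs.const_mul c₃),
        intervalIntegral.integral_const_mul, intervalIntegral.integral_const_mul,
        intervalIntegral.integral_const_mul]
    have hE : θ * A + (c₂ * B + c₃ * T) ≤ 2 * (1/100) := by
      rw [← hGeq]; exact le_trans hGle hLW
    -- eliminate T
    have hc₃T : -(3/16) * (B - 1/50) ≤ c₃ * T := by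
      have hpos : (0:ℝ) ≤ 3 / (4 * A ^ 2) := by positivity
      have h := mul_le_mul_of_nonneg_left hTle hpos
      have he : 3 / (4 * A ^ 2) * (A ^ 2 / 4 * (B - 1/50)) = 3/16 * (B - 1/50) := by
        field_simp
        ring
      rw [he] at h
      rw [hc₃def]
      linarith
    have hfinal : θ * A + c₂ * B - 3/16 * (B - 1/50) ≤ 2 * (1/100) := by linarith
    rw [hθdef, hc₂def, hθdef] at hfinal
    -- numeric contradiction
    have hAsq : A ^ 2 ≤ 1/2500 := by nlinarith [hA.le, hA2]
    have hC : 0 ≤ 1 - (50 * A / 3) ^ 2 - 3 / 4 * A ^ 2 - 3/16 := by nlinarith [hAsq]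
    have hApos : 0 < A ^ 2 := by positivity
    nlinarith [mul_le_mul_of_nonneg_left hB hC, hApos]
end

section
/- Let a, b ∈ ℕ, let α : (-1,1) → [0,1] be smooth, and define the normal Hamiltonian H : M × ℝ³ → ℝ by H(x,p) := (1/2)·( p₁² + (p₂ + x₁²x₂^b·p₃)² / (1 − α(x₂)x₁x₂^a) ). Fix t₁, t₂ ∈ (-1,1) with t₁ < t₂. Then there exists a differentiable curve p : [t₁,t₂] → ℝ³ such that t ↦ ((0,t,0), p(t)) solves Hamilton's equations for H if and only if α(t) = 0 for all t ∈ [t₁,t₂]. In other words, the abnormal curve γ|[t₁,t₂] is normal if and only if α vanishes identically on [t₁,t₂]. -/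
open Set


open Filter Topology

lemma hd1 (C x : ℝ) : deriv (fun s : ℝ => (1/2 : ℝ) * (s^2 + C)) x = x := by
  have h : HasDerivAt (fun s : ℝ => (1/2 : ℝ) * (s^2 + C)) ((1/2) * ((2:ℕ) * x^1)) x :=
    ((hasDerivAt_pow 2 x).add_const C).const_mul (1/2)
  rw [h.deriv]; push_cast; ring

lemma hd2 (C x : ℝ) : deriv (fun s : ℝ => (1/2 : ℝ) * (C + s^2)) x = x := by
  have h : HasDerivAt (fun s : ℝ => (1/2 : ℝ) * (C + s^2)) ((1/2) * ((2:ℕ) * x^1)) x :=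
    (((hasDerivAt_pow 2 x)).const_add C).const_mul (1/2)
  rw [h.deriv]; push_cast; ring

lemma hd3 (A P c1 c2 : ℝ) :
    deriv (fun s : ℝ => (1/2 : ℝ) * (A + (P + s^2*c1)^2 / (1 - c2*s))) 0
      = (1/2) * (P^2 * c2) := by
  have hnum : HasDerivAt (fun s : ℝ => (P + s^2*c1)^2)
      ((2:ℕ) * (P + (0:ℝ)^2*c1)^1 * ((2:ℕ) * (0:ℝ)^1 * c1)) 0 :=
    (((hasDerivAt_pow 2 0).mul_const c1).const_add P).pow 2
  have hden : HasDerivAt (fun s : ℝ => 1 - c2*s) (-(c2 * 1)) 0 :=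
    ((hasDerivAt_id 0).const_mul c2).const_sub 1
  have hne : (1 : ℝ) - c2 * 0 ≠ 0 := by norm_num
  have h := (((hnum.div hden hne).const_add A).const_mul (1/2 : ℝ))
  have h2 := h.deriv; simp only [Pi.div_apply] at h2; rw [h2]; push_cast; norm_num

/-- Let `H(x,p) = ½(p₁² + (p₂ + x₁²x₂^b p₃)²/(1 - α(x₂)x₁x₂^a))` be the
normal Hamiltonian. The curve `γ(t) = (0,t,0)` on `[t₁,t₂] ⊂ (-1,1)` admits a
differentiable lift `p : [t₁,t₂] → ℝ³` such that `t ↦ ((0,t,0), p(t))` solves Hamilton's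
equations `x' = ∂H/∂p`, `p' = -∂H/∂x` (note `γ' = (0,1,0)`) if and only if `α ≡ 0` on
`[t₁,t₂]`. Partial derivatives are expressed via `deriv` in each coordinate, and the
derivatives of `p` are derivatives within `[t₁,t₂]`. -/
theorem statement3 (a b : ℕ) (α : ℝ → ℝ)
    (hα : ContDiffOn ℝ (⊤ : ℕ∞) α (Ioo (-1 : ℝ) 1))
    (hαr : ∀ s ∈ Ioo (-1 : ℝ) 1, α s ∈ Icc (0 : ℝ) 1)
    (t₁ t₂ : ℝ) (ht₁ : t₁ ∈ Ioo (-1 : ℝ) 1) (ht₂ : t₂ ∈ Ioo (-1 : ℝ) 1) (h12 : t₁ < t₂)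
    (H : ℝ → ℝ → ℝ → ℝ → ℝ → ℝ → ℝ)
    (hH : ∀ x1 x2 x3 p1 p2 p3 : ℝ, H x1 x2 x3 p1 p2 p3 =
      (1/2) * (p1 ^ 2 + (p2 + x1 ^ 2 * x2 ^ b * p3) ^ 2 / (1 - α x2 * x1 * x2 ^ a))) :
    (∃ p₁ p₂ p₃ : ℝ → ℝ, ∀ t ∈ Icc t₁ t₂,
        -- x' = ∂H/∂p along x(t) = (0, t, 0), whose velocity is (0, 1, 0)
        deriv (fun s => H 0 t 0 s (p₂ t) (p₃ t)) (p₁ t) = 0 ∧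
        deriv (fun s => H 0 t 0 (p₁ t) s (p₃ t)) (p₂ t) = 1 ∧
        deriv (fun s => H 0 t 0 (p₁ t) (p₂ t) s) (p₃ t) = 0 ∧
        -- p' = -∂H/∂x along x(t) = (0, t, 0)
        HasDerivWithinAt p₁
          (-(deriv (fun s => H s t 0 (p₁ t) (p₂ t) (p₃ t)) 0)) (Icc t₁ t₂) t ∧
        HasDerivWithinAt p₂
          (-(deriv (fun s => H 0 s 0 (p₁ t) (p₂ t) (p₃ t)) t)) (Icc t₁ t₂) t ∧
        HasDerivWithinAt p₃
          (-(deriv (fun s => H 0 t s (p₁ t) (p₂ t) (p₃ t)) 0)) (Icc t₁ t₂) t) ↔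
    (∀ t ∈ Icc t₁ t₂, α t = 0) := by
  have hsub : Icc t₁ t₂ ⊆ Ioo (-1 : ℝ) 1 := Icc_subset_Ioo ht₁.1 ht₂.2
  constructor
  · rintro ⟨p₁, p₂, p₃, hp⟩
    have hp1 : ∀ t ∈ Icc t₁ t₂, p₁ t = 0 := by
      intro t ht
      have h1 := (hp t ht).1
      have e : (fun s => H 0 t 0 s (p₂ t) (p₃ t))
          = fun s : ℝ => (1/2 : ℝ) * (s^2 + (p₂ t)^2) := by
        funext s; rw [hH]; norm_num
      rwa [e, hd1] at h1
    have hp2 : ∀ t ∈ Icc t₁ t₂, p₂ t = 1 := by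
      intro t ht
      have h2 := (hp t ht).2.1
      have e : (fun s => H 0 t 0 (p₁ t) s (p₃ t))
          = fun s : ℝ => (1/2 : ℝ) * ((p₁ t)^2 + s^2) := by
        funext s; rw [hH]; norm_num
      rwa [e, hd2] at h2
    have hkey : ∀ t ∈ Icc t₁ t₂, α t * t ^ a = 0 := by
      intro t ht
      have h4 := (hp t ht).2.2.2.1
      have e : (fun s => H s t 0 (p₁ t) (p₂ t) (p₃ t))
          = fun s : ℝ => (1/2 : ℝ) * ((p₁ t)^2
              + (p₂ t + s^2 * (t^b * p₃ t))^2 / (1 - (α t * t^a) * s)) := by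
        funext s; rw [hH]; ring_nf
      rw [e, hd3] at h4
      have h0 : HasDerivWithinAt p₁ 0 (Icc t₁ t₂) t :=
        (hasDerivWithinAt_const t _ 0).congr (fun y hy => hp1 y hy) (hp1 t ht)
      have hU := (uniqueDiffOn_Icc h12) t ht
      have heq : -((1/2 : ℝ) * ((p₂ t)^2 * (α t * t^a))) = 0 := by
        rw [← h4.derivWithin hU, h0.derivWithin hU]
      rw [hp2 t ht] at heq
      nlinarith [heq]
    intro t ht
    rcases eq_or_ne t 0 with rfl | hne
    · -- t = 0 : use continuity
      have hzero : ∀ y ∈ Icc t₁ t₂ \ {(0:ℝ)}, α y = 0 := by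
        intro y hy
        have hk := hkey y hy.1
        have : y ^ a ≠ 0 := pow_ne_zero a hy.2
        exact (mul_eq_zero.mp hk).resolve_right this
      have hS : (𝓝[Icc t₁ t₂ \ {(0:ℝ)}] 0).NeBot := by
        rcases lt_or_ge 0 t₂ with h | h
        · have hss : Ioo (0:ℝ) t₂ ⊆ Icc t₁ t₂ \ {(0:ℝ)} := by
            intro y hy
            exact ⟨⟨le_trans ht.1 hy.1.le, hy.2.le⟩, ne_of_gt hy.1⟩
          have h0c : (0:ℝ) ∈ closure (Ioo (0:ℝ) t₂) := by
            rw [closure_Ioo (ne_of_lt h)]; exact ⟨le_refl 0, h.le⟩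
          exact (mem_closure_iff_nhdsWithin_neBot.mp h0c).mono
            (nhdsWithin_mono 0 hss)
        · have h1 : t₁ < 0 := lt_of_lt_of_le h12 h
          have hss : Ioo t₁ (0:ℝ) ⊆ Icc t₁ t₂ \ {(0:ℝ)} := by
            intro y hy
            exact ⟨⟨hy.1.le, le_trans hy.2.le ht.2⟩, ne_of_lt hy.2⟩
          have h0c : (0:ℝ) ∈ closure (Ioo t₁ (0:ℝ)) := by
            rw [closure_Ioo (ne_of_lt h1)]; exact ⟨h1.le, le_refl 0⟩
          exact (mem_closure_iff_nhdsWithin_neBot.mp h0c).mono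
            (nhdsWithin_mono 0 hss)
      have hc : ContinuousWithinAt α (Icc t₁ t₂ \ {(0:ℝ)}) 0 :=
        ((hα.continuousOn.mono hsub).continuousWithinAt ht).mono diff_subset
      have h1 : Filter.Tendsto α (𝓝[Icc t₁ t₂ \ {(0:ℝ)}] 0) (𝓝 (α 0)) := hc
      have h2 : Filter.Tendsto α (𝓝[Icc t₁ t₂ \ {(0:ℝ)}] 0) (𝓝 0) := by
        refine Filter.Tendsto.congr' ?_ tendsto_const_nhds
        filter_upwards [eventually_mem_nhdsWithin] with y hy
        exact (hzero y hy).symm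
      exact tendsto_nhds_unique h1 h2
    · have hk := hkey t ht
      exact (mul_eq_zero.mp hk).resolve_right (pow_ne_zero a hne)
  · intro hα0
    refine ⟨fun _ => 0, fun _ => 1, fun _ => 0, fun t ht => ?_⟩
    refine ⟨?_, ?_, ?_, ?_, ?_, ?_⟩
    · have e : (fun s => H 0 t 0 s ((fun _ : ℝ => (1:ℝ)) t) ((fun _ : ℝ => (0:ℝ)) t))
          = fun s : ℝ => (1/2 : ℝ) * (s^2 + 1) := by
        funext s; rw [hH]; norm_num
      rw [e, hd1]
    · have e : (fun s => H 0 t 0 ((fun _ : ℝ => (0:ℝ)) t) s ((fun _ : ℝ => (0:ℝ)) t))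
          = fun s : ℝ => (1/2 : ℝ) * (0 + s^2) := by
        funext s; rw [hH]; norm_num
      rw [e, hd2]
    · have e : (fun s => H 0 t 0 ((fun _ : ℝ => (0:ℝ)) t) ((fun _ : ℝ => (1:ℝ)) t) s)
          = fun _ : ℝ => (1/2 : ℝ) := by
        funext s; rw [hH]; norm_num
      rw [e, deriv_const]
    · have e : (fun s => H s t 0 ((fun _ : ℝ => (0:ℝ)) t) ((fun _ : ℝ => (1:ℝ)) t)
          ((fun _ : ℝ => (0:ℝ)) t)) = fun _ : ℝ => (1/2 : ℝ) := by
        funext s; rw [hH, hα0 t ht]; norm_num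
      rw [e, deriv_const, neg_zero]
      exact hasDerivWithinAt_const t _ 0
    · have e : (fun s => H 0 s 0 ((fun _ : ℝ => (0:ℝ)) t) ((fun _ : ℝ => (1:ℝ)) t)
          ((fun _ : ℝ => (0:ℝ)) t)) = fun _ : ℝ => (1/2 : ℝ) := by
        funext s; rw [hH]; norm_num
      rw [e, deriv_const, neg_zero]
      exact hasDerivWithinAt_const t _ 1
    · have e : (fun s => H 0 t s ((fun _ : ℝ => (0:ℝ)) t) ((fun _ : ℝ => (1:ℝ)) t)
          ((fun _ : ℝ => (0:ℝ)) t)) = fun _ : ℝ => (1/2 : ℝ) := by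
        funext s; rw [hH]; norm_num
      rw [e, deriv_const, neg_zero]
      exact hasDerivWithinAt_const t _ 0
end

section
/- Let Ω ⊂ ℝ² be open, M := Ω × ℝ, and let ψ : M → ℝ be smooth with ∂ψ/∂x₃ ≡ 0. Let v₁, v₂, w₁, w₂ : Ω → ℝ be smooth functions such that the plane vectors (v₁(y),v₂(y)) and (w₁(y),w₂(y)) are linearly independent for every y ∈ Ω. Define H : M × ℝ³ → ℝ by H(x,p) := (1/2)[ (v₁(x₁,x₂)p₁ + v₂(x₁,x₂)(p₂ + ψ(x)p₃))² + (w₁(x₁,x₂)p₁ + w₂(x₁,x₂)(p₂ + ψ(x)p₃))² ] and H̄ : Ω × ℝ² → ℝ by H̄(y,q) := (1/2)[ (v₁(y)q₁ + v₂(y)q₂)² + (w₁(y)q₁ + w₂(y)q₂)² ]. Let η : [0,T] → M be an absolutely continuous curve with η₃'(t) = ψ(η(t))·η₂'(t) for a.e. t, and suppose ψ(η(t)) = 0 and the full differential dψ at η(t) vanishes, for every t ∈ [0,T]. Then there exists a curve p : [0,T] → ℝ³ such that (η,p) solves Hamilton's equations for H if and only if there exists a curve q : [0,T] → ℝ² such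 that ((η₁,η₂),q) solves Hamilton's equations for H̄. -/
open Set MeasureTheory

private lemma derivEq {f g F G φ : ℝ → ℝ} {x f' g' F' G' : ℝ} (P₁ P₂ P₃ : ℝ)
    (hf : HasDerivAt f f' x) (hg : HasDerivAt g g' x)
    (hF : HasDerivAt F F' x) (hG : HasDerivAt G G' x)
    (hφ : HasDerivAt φ 0 x) (hφ0 : φ x = 0) :
    deriv (fun s => (1/2 : ℝ) * ((f s * P₁ + g s * (P₂ + φ s * P₃)) ^ 2 +
      (F s * P₁ + G s * (P₂ + φ s * P₃)) ^ 2)) x =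
    deriv (fun s => (1/2 : ℝ) * ((f s * P₁ + g s * P₂) ^ 2 +
      (F s * P₁ + G s * P₂) ^ 2)) x := by
  have h1 := ((((hf.mul_const P₁).add (hg.mul ((hasDerivAt_const x P₂).add (hφ.mul_const P₃)))).pow 2).add
      (((hF.mul_const P₁).add (hG.mul ((hasDerivAt_const x P₂).add (hφ.mul_const P₃)))).pow 2)).const_mul (1/2 : ℝ)
  have h2 := ((((hf.mul_const P₁).add (hg.mul_const P₂)).pow 2).add
      (((hF.mul_const P₁).add (hG.mul_const P₂)).pow 2)).const_mul (1/2 : ℝ)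
  simp only [Pi.add_apply, Pi.mul_apply, Pi.pow_apply] at h1 h2
  rw [h1.deriv, h2.deriv, hφ0]
  push_cast
  ring


/-- Let `Ω ⊆ ℝ²` be open, `M = Ω × ℝ`, `ψ : M → ℝ` smooth with
`∂ψ/∂x₃ ≡ 0`, and let `v₁,v₂,w₁,w₂` be smooth on `Ω` with `(v₁,v₂)`, `(w₁,w₂)` pointwise
linearly independent. Let `H` be the sub-Riemannian normal Hamiltonian on `M × ℝ³`
written in the frame `V = v₁X₁ + v₂X₂`, `W = w₁X₁ + w₂X₂` (with `X₁ = ∂₁`,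
`X₂ = ∂₂ + ψ∂₃`), and `H̄` the Riemannian Hamiltonian on `Ω × ℝ²`. If `η : [0,T] → M`
is horizontal (encoded by integrable controls `u₁ = η₁'`, `u₂ = η₂'` and
`η₃' = ψ(η)·η₂'`) with `ψ(η(t)) = 0` and `dψ = 0` at `η(t)` for all `t`, then `η` admits
a lift `p` solving Hamilton's equations for `H` iff `(η₁,η₂)` admits a lift `q` solving
Hamilton's equations for `H̄`. Derivatives of the curves are derivatives within
`[0,T]`. -/
theorem statement4
    (Ω : Set (ℝ × ℝ)) (hΩ : IsOpen Ω)
    (ψ : ℝ → ℝ → ℝ → ℝ)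
    (hψ : ContDiffOn ℝ (⊤ : ℕ∞) (fun x : ℝ × ℝ × ℝ => ψ x.1 x.2.1 x.2.2)
      {x : ℝ × ℝ × ℝ | (x.1, x.2.1) ∈ Ω})
    (hψ3 : ∀ x1 x2 x3 : ℝ, (x1, x2) ∈ Ω → deriv (fun s => ψ x1 x2 s) x3 = 0)
    (v₁ v₂ w₁ w₂ : ℝ × ℝ → ℝ)
    (hv₁ : ContDiffOn ℝ (⊤ : ℕ∞) v₁ Ω) (hv₂ : ContDiffOn ℝ (⊤ : ℕ∞) v₂ Ω)
    (hw₁ : ContDiffOn ℝ (⊤ : ℕ∞) w₁ Ω) (hw₂ : ContDiffOn ℝ (⊤ : ℕ∞) w₂ Ω)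
    (hindep : ∀ y ∈ Ω, LinearIndependent ℝ ![(v₁ y, v₂ y), (w₁ y, w₂ y)])
    (H : ℝ → ℝ → ℝ → ℝ → ℝ → ℝ → ℝ)
    (hH : ∀ x1 x2 x3 p1 p2 p3 : ℝ, H x1 x2 x3 p1 p2 p3 =
      (1/2) * ((v₁ (x1, x2) * p1 + v₂ (x1, x2) * (p2 + ψ x1 x2 x3 * p3)) ^ 2 +
               (w₁ (x1, x2) * p1 + w₂ (x1, x2) * (p2 + ψ x1 x2 x3 * p3)) ^ 2))
    (Hbar : ℝ → ℝ → ℝ → ℝ → ℝ)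
    (hHbar : ∀ y1 y2 q1 q2 : ℝ, Hbar y1 y2 q1 q2 =
      (1/2) * ((v₁ (y1, y2) * q1 + v₂ (y1, y2) * q2) ^ 2 +
               (w₁ (y1, y2) * q1 + w₂ (y1, y2) * q2) ^ 2))
    (T : ℝ) (hT : 0 < T)
    (η₁ η₂ η₃ u₁ u₂ : ℝ → ℝ)
    (hu₁ : IntervalIntegrable u₁ volume 0 T)
    (hu₂ : IntervalIntegrable u₂ volume 0 T)
    (hu₃ : IntervalIntegrable (fun s => ψ (η₁ s) (η₂ s) (η₃ s) * u₂ s) volume 0 T)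
    (hmem : ∀ t ∈ Icc (0 : ℝ) T, (η₁ t, η₂ t) ∈ Ω)
    (hrep₁ : ∀ t ∈ Icc (0 : ℝ) T, η₁ t = η₁ 0 + ∫ s in (0 : ℝ)..t, u₁ s)
    (hrep₂ : ∀ t ∈ Icc (0 : ℝ) T, η₂ t = η₂ 0 + ∫ s in (0 : ℝ)..t, u₂ s)
    (hrep₃ : ∀ t ∈ Icc (0 : ℝ) T,
      η₃ t = η₃ 0 + ∫ s in (0 : ℝ)..t, ψ (η₁ s) (η₂ s) (η₃ s) * u₂ s)
    (hψ0 : ∀ t ∈ Icc (0 : ℝ) T, ψ (η₁ t) (η₂ t) (η₃ t) = 0)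
    (hdψ0 : ∀ t ∈ Icc (0 : ℝ) T,
      fderiv ℝ (fun x : ℝ × ℝ × ℝ => ψ x.1 x.2.1 x.2.2) (η₁ t, η₂ t, η₃ t) = 0) :
    (∃ p₁ p₂ p₃ : ℝ → ℝ, ∀ t ∈ Icc (0 : ℝ) T,
        HasDerivWithinAt η₁
          (deriv (fun s => H (η₁ t) (η₂ t) (η₃ t) s (p₂ t) (p₃ t)) (p₁ t))
          (Icc (0 : ℝ) T) t ∧
        HasDerivWithinAt η₂
          (deriv (fun s => H (η₁ t) (η₂ t) (η₃ t) (p₁ t) s (p₃ t)) (p₂ t))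
          (Icc (0 : ℝ) T) t ∧
        HasDerivWithinAt η₃
          (deriv (fun s => H (η₁ t) (η₂ t) (η₃ t) (p₁ t) (p₂ t) s) (p₃ t))
          (Icc (0 : ℝ) T) t ∧
        HasDerivWithinAt p₁
          (-(deriv (fun s => H s (η₂ t) (η₃ t) (p₁ t) (p₂ t) (p₃ t)) (η₁ t)))
          (Icc (0 : ℝ) T) t ∧
        HasDerivWithinAt p₂
          (-(deriv (fun s => H (η₁ t) s (η₃ t) (p₁ t) (p₂ t) (p₃ t)) (η₂ t)))
          (Icc (0 : ℝ) T) t ∧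
        HasDerivWithinAt p₃
          (-(deriv (fun s => H (η₁ t) (η₂ t) s (p₁ t) (p₂ t) (p₃ t)) (η₃ t)))
          (Icc (0 : ℝ) T) t) ↔
    (∃ q₁ q₂ : ℝ → ℝ, ∀ t ∈ Icc (0 : ℝ) T,
        HasDerivWithinAt η₁
          (deriv (fun s => Hbar (η₁ t) (η₂ t) s (q₂ t)) (q₁ t)) (Icc (0 : ℝ) T) t ∧
        HasDerivWithinAt η₂
          (deriv (fun s => Hbar (η₁ t) (η₂ t) (q₁ t) s) (q₂ t)) (Icc (0 : ℝ) T) t ∧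
        HasDerivWithinAt q₁
          (-(deriv (fun s => Hbar s (η₂ t) (q₁ t) (q₂ t)) (η₁ t))) (Icc (0 : ℝ) T) t ∧
        HasDerivWithinAt q₂
          (-(deriv (fun s => Hbar (η₁ t) s (q₁ t) (q₂ t)) (η₂ t))) (Icc (0 : ℝ) T) t) := by
  have hU : IsOpen {x : ℝ × ℝ × ℝ | (x.1, x.2.1) ∈ Ω} :=
    hΩ.preimage (continuous_fst.prodMk (continuous_fst.comp continuous_snd))
  -- momentum-slot function identities
  have keyP1 : ∀ t ∈ Icc (0:ℝ) T, ∀ P₂ P₃ : ℝ,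
      (fun s => H (η₁ t) (η₂ t) (η₃ t) s P₂ P₃)
        = (fun s => Hbar (η₁ t) (η₂ t) s P₂) := by
    intro t ht P₂ P₃
    funext s
    rw [hH, hHbar, hψ0 t ht]
    ring
  have keyP2 : ∀ t ∈ Icc (0:ℝ) T, ∀ P₁ P₃ : ℝ,
      (fun s => H (η₁ t) (η₂ t) (η₃ t) P₁ s P₃)
        = (fun s => Hbar (η₁ t) (η₂ t) P₁ s) := by
    intro t ht P₁ P₃
    funext s
    rw [hH, hHbar, hψ0 t ht]
    ring
  have keyP3 : ∀ t ∈ Icc (0:ℝ) T, ∀ P₁ P₂ : ℝ,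
      (fun s => H (η₁ t) (η₂ t) (η₃ t) P₁ P₂ s)
        = (fun _ => Hbar (η₁ t) (η₂ t) P₁ P₂) := by
    intro t ht P₁ P₂
    funext s
    rw [hH, hHbar, hψ0 t ht]
    ring
  -- differentiability helpers
  have hdvw : ∀ t ∈ Icc (0:ℝ) T,
      DifferentiableAt ℝ v₁ (η₁ t, η₂ t) ∧ DifferentiableAt ℝ v₂ (η₁ t, η₂ t) ∧
      DifferentiableAt ℝ w₁ (η₁ t, η₂ t) ∧ DifferentiableAt ℝ w₂ (η₁ t, η₂ t) := by
    intro t ht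
    have h := hΩ.mem_nhds (hmem t ht)
    exact ⟨(hv₁.differentiableOn (by simp)).differentiableAt h,
      (hv₂.differentiableOn (by simp)).differentiableAt h,
      (hw₁.differentiableOn (by simp)).differentiableAt h,
      (hw₂.differentiableOn (by simp)).differentiableAt h⟩
  have hΦfd : ∀ t ∈ Icc (0:ℝ) T,
      HasFDerivAt (fun x : ℝ × ℝ × ℝ => ψ x.1 x.2.1 x.2.2)
        (0 : ℝ × ℝ × ℝ →L[ℝ] ℝ) (η₁ t, η₂ t, η₃ t) := by
    intro t ht
    have hm : (η₁ t, η₂ t, η₃ t) ∈ {x : ℝ × ℝ × ℝ | (x.1, x.2.1) ∈ Ω} := hmem t ht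
    have := ((hψ.differentiableOn (by simp)).differentiableAt (hU.mem_nhds hm)).hasFDerivAt
    rwa [hdψ0 t ht] at this
  -- x₁ partials agree
  have keyX1 : ∀ t ∈ Icc (0:ℝ) T, ∀ P₁ P₂ P₃ : ℝ,
      deriv (fun s => H s (η₂ t) (η₃ t) P₁ P₂ P₃) (η₁ t)
        = deriv (fun s => Hbar s (η₂ t) P₁ P₂) (η₁ t) := by
    intro t ht P₁ P₂ P₃
    obtain ⟨hd1, hd2, hd3, hd4⟩ := hdvw t ht
    have hcurve : DifferentiableAt ℝ (fun s : ℝ => (s, η₂ t)) (η₁ t) :=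
      differentiableAt_id.prodMk (differentiableAt_const _)
    have hf := (hd1.comp (η₁ t) hcurve).hasDerivAt
    have hg := (hd2.comp (η₁ t) hcurve).hasDerivAt
    have hF := (hd3.comp (η₁ t) hcurve).hasDerivAt
    have hG := (hd4.comp (η₁ t) hcurve).hasDerivAt
    have hc : HasDerivAt (fun s : ℝ => (s, η₂ t, η₃ t))
        ((1:ℝ), (0:ℝ), (0:ℝ)) (η₁ t) :=
      (hasDerivAt_id _).prodMk ((hasDerivAt_const _ _).prodMk (hasDerivAt_const _ _))
    have hφ : HasDerivAt (fun s => ψ s (η₂ t) (η₃ t)) 0 (η₁ t) := by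
      simpa [Function.comp_def] using (hΦfd t ht).comp_hasDerivAt (η₁ t) hc
    have e1 : (fun s => H s (η₂ t) (η₃ t) P₁ P₂ P₃)
        = (fun s => (1/2 : ℝ) * ((v₁ (s, η₂ t) * P₁ +
            v₂ (s, η₂ t) * (P₂ + ψ s (η₂ t) (η₃ t) * P₃)) ^ 2 +
          (w₁ (s, η₂ t) * P₁ +
            w₂ (s, η₂ t) * (P₂ + ψ s (η₂ t) (η₃ t) * P₃)) ^ 2)) :=
      funext fun s => hH s (η₂ t) (η₃ t) P₁ P₂ P₃
    have e2 : (fun s => Hbar s (η₂ t) P₁ P₂)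
        = (fun s => (1/2 : ℝ) * ((v₁ (s, η₂ t) * P₁ + v₂ (s, η₂ t) * P₂) ^ 2 +
          (w₁ (s, η₂ t) * P₁ + w₂ (s, η₂ t) * P₂) ^ 2)) :=
      funext fun s => hHbar s (η₂ t) P₁ P₂
    rw [e1, e2]
    exact derivEq P₁ P₂ P₃ hf hg hF hG hφ (hψ0 t ht)
  -- x₂ partials agree
  have keyX2 : ∀ t ∈ Icc (0:ℝ) T, ∀ P₁ P₂ P₃ : ℝ,
      deriv (fun s => H (η₁ t) s (η₃ t) P₁ P₂ P₃) (η₂ t)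
        = deriv (fun s => Hbar (η₁ t) s P₁ P₂) (η₂ t) := by
    intro t ht P₁ P₂ P₃
    obtain ⟨hd1, hd2, hd3, hd4⟩ := hdvw t ht
    have hcurve : DifferentiableAt ℝ (fun s : ℝ => (η₁ t, s)) (η₂ t) :=
      (differentiableAt_const _).prodMk differentiableAt_id
    have hf := (hd1.comp (η₂ t) hcurve).hasDerivAt
    have hg := (hd2.comp (η₂ t) hcurve).hasDerivAt
    have hF := (hd3.comp (η₂ t) hcurve).hasDerivAt
    have hG := (hd4.comp (η₂ t) hcurve).hasDerivAt
    have hc : HasDerivAt (fun s : ℝ => (η₁ t, s, η₃ t))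
        ((0:ℝ), (1:ℝ), (0:ℝ)) (η₂ t) :=
      (hasDerivAt_const _ _).prodMk ((hasDerivAt_id _).prodMk (hasDerivAt_const _ _))
    have hφ : HasDerivAt (fun s => ψ (η₁ t) s (η₃ t)) 0 (η₂ t) := by
      simpa [Function.comp_def] using (hΦfd t ht).comp_hasDerivAt (η₂ t) hc
    have e1 : (fun s => H (η₁ t) s (η₃ t) P₁ P₂ P₃)
        = (fun s => (1/2 : ℝ) * ((v₁ (η₁ t, s) * P₁ +
            v₂ (η₁ t, s) * (P₂ + ψ (η₁ t) s (η₃ t) * P₃)) ^ 2 +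
          (w₁ (η₁ t, s) * P₁ +
            w₂ (η₁ t, s) * (P₂ + ψ (η₁ t) s (η₃ t) * P₃)) ^ 2)) :=
      funext fun s => hH (η₁ t) s (η₃ t) P₁ P₂ P₃
    have e2 : (fun s => Hbar (η₁ t) s P₁ P₂)
        = (fun s => (1/2 : ℝ) * ((v₁ (η₁ t, s) * P₁ + v₂ (η₁ t, s) * P₂) ^ 2 +
          (w₁ (η₁ t, s) * P₁ + w₂ (η₁ t, s) * P₂) ^ 2)) :=
      funext fun s => hHbar (η₁ t) s P₁ P₂
    rw [e1, e2]
    exact derivEq P₁ P₂ P₃ hf hg hF hG hφ (hψ0 t ht)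
  -- x₃ partial vanishes
  have keyX3 : ∀ t ∈ Icc (0:ℝ) T, ∀ P₁ P₂ P₃ : ℝ,
      deriv (fun s => H (η₁ t) (η₂ t) s P₁ P₂ P₃) (η₃ t) = 0 := by
    intro t ht P₁ P₂ P₃
    have hc : HasDerivAt (fun s : ℝ => (η₁ t, η₂ t, s))
        ((0:ℝ), (0:ℝ), (1:ℝ)) (η₃ t) :=
      (hasDerivAt_const _ _).prodMk ((hasDerivAt_const _ _).prodMk (hasDerivAt_id _))
    have hφ : HasDerivAt (fun s => ψ (η₁ t) (η₂ t) s) 0 (η₃ t) := by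
      simpa [Function.comp_def] using (hΦfd t ht).comp_hasDerivAt (η₃ t) hc
    have e1 : (fun s => H (η₁ t) (η₂ t) s P₁ P₂ P₃)
        = (fun s => (1/2 : ℝ) * ((v₁ (η₁ t, η₂ t) * P₁ +
            v₂ (η₁ t, η₂ t) * (P₂ + ψ (η₁ t) (η₂ t) s * P₃)) ^ 2 +
          (w₁ (η₁ t, η₂ t) * P₁ +
            w₂ (η₁ t, η₂ t) * (P₂ + ψ (η₁ t) (η₂ t) s * P₃)) ^ 2)) :=
      funext fun s => hH (η₁ t) (η₂ t) s P₁ P₂ P₃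
    rw [e1]
    have := derivEq (f := fun _ : ℝ => v₁ (η₁ t, η₂ t)) (g := fun _ : ℝ => v₂ (η₁ t, η₂ t))
      (F := fun _ : ℝ => w₁ (η₁ t, η₂ t)) (G := fun _ : ℝ => w₂ (η₁ t, η₂ t))
      (x := η₃ t) P₁ P₂ P₃ (hasDerivAt_const _ _) (hasDerivAt_const _ _)
      (hasDerivAt_const _ _) (hasDerivAt_const _ _) hφ (hψ0 t ht)
    rw [this]
    exact deriv_const _ _
  -- η₃ is constant
  have hη₃c : ∀ t ∈ Icc (0:ℝ) T, η₃ t = η₃ 0 := by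
    intro t ht
    rw [hrep₃ t ht]
    have hzero : ∀ r ∈ uIcc (0:ℝ) t, ψ (η₁ r) (η₂ r) (η₃ r) * u₂ r = 0 := by
      intro r hr
      rw [uIcc_of_le ht.1] at hr
      rw [hψ0 r ⟨hr.1, hr.2.trans ht.2⟩, zero_mul]
    rw [intervalIntegral.integral_congr (g := fun _ => (0:ℝ)) hzero]
    simp
  constructor
  · rintro ⟨p₁, p₂, p₃, hp⟩
    refine ⟨p₁, p₂, fun t ht => ?_⟩
    obtain ⟨h1, h2, h3, h4, h5, h6⟩ := hp t ht
    refine ⟨?_, ?_, ?_, ?_⟩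
    · rw [← keyP1 t ht (p₂ t) (p₃ t)]; exact h1
    · rw [← keyP2 t ht (p₁ t) (p₃ t)]; exact h2
    · rw [← keyX1 t ht (p₁ t) (p₂ t) (p₃ t)]; exact h4
    · rw [← keyX2 t ht (p₁ t) (p₂ t) (p₃ t)]; exact h5
  · rintro ⟨q₁, q₂, hq⟩
    refine ⟨q₁, q₂, fun _ => 0, fun t ht => ?_⟩
    obtain ⟨h1, h2, h3, h4⟩ := hq t ht
    refine ⟨?_, ?_, ?_, ?_, ?_, ?_⟩
    · rw [keyP1 t ht (q₂ t) ((fun _ => (0:ℝ)) t)]; exact h1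
    · rw [keyP2 t ht (q₁ t) ((fun _ => (0:ℝ)) t)]; exact h2
    · rw [keyP3 t ht (q₁ t) (q₂ t), deriv_const]
      exact (hasDerivWithinAt_const t _ (η₃ 0)).congr
        (fun s hs => hη₃c s hs) (hη₃c t ht)
    · rw [keyX1 t ht (q₁ t) (q₂ t) ((fun _ => (0:ℝ)) t)]; exact h3
    · rw [keyX2 t ht (q₁ t) (q₂ t) ((fun _ => (0:ℝ)) t)]; exact h4
    · rw [keyX3 t ht (q₁ t) (q₂ t) ((fun _ => (0:ℝ)) t), neg_zero]
      exact hasDerivWithinAt_const _ _ _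
end

section
/- Let a ∈ ℕ, let α : (-1,1) → [0,1] be smooth, and define H̄ : ((−1/2,1/2)×(−1,1)) × ℝ² → ℝ by H̄(y,q) := (1/2)·( q₁² + q₂² / (1 − α(y₂)y₁y₂^a) ). Fix t₁, t₂ ∈ (−1,1) with t₁ < t₂. Then there exists a differentiable curve q : [t₁,t₂] → ℝ² such that t ↦ ((0,t), q(t)) solves Hamilton's equations for H̄ if and only if α(t) = 0 for all t ∈ [t₁,t₂]. Equivalently, the curve t ↦ (0,t) is a geodesic of the Riemannian metric dx₁² + (1 − α(x₂)x₁x₂^a) dx₂² on [t₁,t₂] if and only if α vanishes identically there. -/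
open Set Filter Topology

private lemma derivHalfSqRight (c x : ℝ) :
    deriv (fun s : ℝ => 1/2 * (s ^ 2 + c)) x = x := by
  have h : HasDerivAt (fun s : ℝ => 1/2 * (s ^ 2 + c)) (1/2 * ((2:ℕ) * x ^ (2-1))) x :=
    ((hasDerivAt_pow 2 x).add_const c).const_mul (1/2)
  rw [h.deriv]; norm_num; ring

private lemma derivHalfSqLeft (c x : ℝ) :
    deriv (fun s : ℝ => 1/2 * (c + s ^ 2)) x = x := by
  have h : HasDerivAt (fun s : ℝ => 1/2 * (c + s ^ 2)) (1/2 * ((2:ℕ) * x ^ (2-1))) x :=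
    ((hasDerivAt_pow 2 x).const_add c).const_mul (1/2)
  rw [h.deriv]; norm_num; ring

private lemma derivInvAffine (b : ℝ) :
    deriv (fun s : ℝ => 1/2 * ((0:ℝ) + 1 / (1 - b * s))) 0 = b / 2 := by
  have hg : HasDerivAt (fun s : ℝ => 1 - b * s) (-b) 0 := by
    simpa using ((hasDerivAt_id (0:ℝ)).const_mul b).const_sub 1
  have hinv : HasDerivAt (fun s : ℝ => (1 - b * s)⁻¹) (-(-b) / (1 - b * 0) ^ 2) 0 :=
    hg.inv (by norm_num)
  have h : HasDerivAt (fun s : ℝ => 1/2 * ((0:ℝ) + 1 / (1 - b * s)))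
      (1/2 * (-(-b) / (1 - b * 0) ^ 2)) 0 := by
    simpa [one_div] using (hinv.const_add (0:ℝ)).const_mul (1/2 : ℝ)
  rw [h.deriv]; norm_num; ring

/-- Let `H̄(y,q) = ½(q₁² + q₂²/(1 - α(y₂)y₁y₂^a))` be the cometric
Hamiltonian of the Riemannian metric `dx₁² + (1 - α(x₂)x₁x₂^a)dx₂²` on
`Ω = (-1/2,1/2) × (-1,1)`. The curve `t ↦ (0,t)` on `[t₁,t₂] ⊂ (-1,1)` admits a
differentiable lift `q : [t₁,t₂] → ℝ²` such that `t ↦ ((0,t), q(t))` solves Hamilton's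
equations `y' = ∂H̄/∂q`, `q' = -∂H̄/∂y` (note the velocity of the base curve is `(0,1)`)
if and only if `α ≡ 0` on `[t₁,t₂]`. -/
theorem statement6 (a : ℕ) (α : ℝ → ℝ)
    (hα : ContDiffOn ℝ (⊤ : ℕ∞) α (Ioo (-1 : ℝ) 1))
    (hαr : ∀ s ∈ Ioo (-1 : ℝ) 1, α s ∈ Icc (0 : ℝ) 1)
    (t₁ t₂ : ℝ) (ht₁ : t₁ ∈ Ioo (-1 : ℝ) 1) (ht₂ : t₂ ∈ Ioo (-1 : ℝ) 1) (h12 : t₁ < t₂)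
    (Hbar : ℝ → ℝ → ℝ → ℝ → ℝ)
    (hHbar : ∀ y1 y2 q1 q2 : ℝ, Hbar y1 y2 q1 q2 =
      (1/2) * (q1 ^ 2 + q2 ^ 2 / (1 - α y2 * y1 * y2 ^ a))) :
    (∃ q₁ q₂ : ℝ → ℝ, ∀ t ∈ Icc t₁ t₂,
        -- y' = ∂H̄/∂q along y(t) = (0, t), whose velocity is (0, 1)
        deriv (fun s => Hbar 0 t s (q₂ t)) (q₁ t) = 0 ∧
        deriv (fun s => Hbar 0 t (q₁ t) s) (q₂ t) = 1 ∧
        -- q' = -∂H̄/∂y along y(t) = (0, t)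
        HasDerivWithinAt q₁
          (-(deriv (fun s => Hbar s t (q₁ t) (q₂ t)) 0)) (Icc t₁ t₂) t ∧
        HasDerivWithinAt q₂
          (-(deriv (fun s => Hbar 0 s (q₁ t) (q₂ t)) t)) (Icc t₁ t₂) t) ↔
    (∀ t ∈ Icc t₁ t₂, α t = 0) := by
  have hsub : Icc t₁ t₂ ⊆ Ioo (-1:ℝ) 1 :=
    fun x hx => ⟨lt_of_lt_of_le ht₁.1 hx.1, lt_of_le_of_lt hx.2 ht₂.2⟩
  constructor
  · rintro ⟨q₁, q₂, hq⟩
    -- first: q₁ ≡ 0 and q₂ ≡ 1 on the interval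
    have hq1 : ∀ t ∈ Icc t₁ t₂, q₁ t = 0 := by
      intro t ht
      have h1 := (hq t ht).1
      have e : (fun s => Hbar 0 t s (q₂ t)) = fun s : ℝ => 1/2 * (s ^ 2 + (q₂ t) ^ 2) := by
        funext s; rw [hHbar]; simp
      rw [e, derivHalfSqRight] at h1
      exact h1
    have hq2 : ∀ t ∈ Icc t₁ t₂, q₂ t = 1 := by
      intro t ht
      have h2 := (hq t ht).2.1
      have e : (fun s => Hbar 0 t (q₁ t) s) = fun s : ℝ => 1/2 * ((q₁ t) ^ 2 + s ^ 2) := by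
        funext s; rw [hHbar]; simp
      rw [e, derivHalfSqLeft] at h2
      exact h2
    -- key: α t * t^a = 0 on the interval
    have key : ∀ t ∈ Icc t₁ t₂, α t * t ^ a = 0 := by
      intro t ht
      have h3 := (hq t ht).2.2.1
      have hd : deriv (fun s => Hbar s t (q₁ t) (q₂ t)) 0 = (α t * t ^ a) / 2 := by
        have e : (fun s => Hbar s t (q₁ t) (q₂ t))
            = fun s : ℝ => 1/2 * ((0:ℝ) + 1 / (1 - (α t * t ^ a) * s)) := by
          funext s; rw [hHbar, hq1 t ht, hq2 t ht]; ring_nf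
        rw [e, derivInvAffine]
      have hzero : HasDerivWithinAt q₁ 0 (Icc t₁ t₂) t :=
        (hasDerivWithinAt_const t _ (0:ℝ)).congr (fun s hs => hq1 s hs) (hq1 t ht)
      have hu : UniqueDiffWithinAt ℝ (Icc t₁ t₂) t := uniqueDiffOn_Icc h12 t ht
      have e1 := hzero.derivWithin hu
      have e2 := h3.derivWithin hu
      rw [e1] at e2
      rw [hd] at e2
      linarith [e2]
    intro t ht
    have hk := key t ht
    rcases Nat.eq_zero_or_pos a with ha | ha
    · simpa [ha] using hk
    · by_cases htz : t = 0
      · subst htz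
        have hzero_ne : ∀ s ∈ Icc t₁ t₂, s ≠ 0 → α s = 0 := by
          intro s hs hs0
          rcases mul_eq_zero.1 (key s hs) with h | h
          · exact h
          · exact absurd ((pow_eq_zero_iff ha.ne').1 h) hs0
        have hcw : ContinuousWithinAt α (Ioo (-1:ℝ) 1) 0 :=
          hα.continuousOn 0 (hsub ht)
        rcases lt_or_ge 0 t₂ with hpos | hneg
        · have hne : (𝓝[Ioo (0:ℝ) t₂] 0).NeBot := by
            rw [← mem_closure_iff_nhdsWithin_neBot, closure_Ioo hpos.ne]
            exact ⟨le_refl 0, hpos.le⟩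
          have hcont : Tendsto α (𝓝[Ioo (0:ℝ) t₂] 0) (𝓝 (α 0)) :=
            hcw.mono_left (nhdsWithin_mono 0
              (fun x hx => ⟨lt_of_lt_of_le (hsub ht).1 hx.1.le, lt_trans hx.2 ht₂.2⟩))
          have heq : ∀ᶠ s in 𝓝[Ioo (0:ℝ) t₂] 0, α s = 0 := by
            filter_upwards [self_mem_nhdsWithin] with s hs
            exact hzero_ne s ⟨le_trans ht.1 hs.1.le, hs.2.le⟩ (ne_of_gt hs.1)
          exact tendsto_nhds_unique hcont
            (tendsto_const_nhds.congr' (heq.mono fun s hs => hs.symm))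
        · have hneg' : t₁ < 0 := by
            rcases lt_or_eq_of_le ht.1 with h | h
            · exact h
            · exfalso; exact absurd (le_antisymm hneg ht.2) (by intro h'; linarith [h12, h'])
          have hne : (𝓝[Ioo t₁ (0:ℝ)] 0).NeBot := by
            rw [← mem_closure_iff_nhdsWithin_neBot, closure_Ioo hneg'.ne]
            exact ⟨hneg'.le, le_refl 0⟩
          have hcont : Tendsto α (𝓝[Ioo t₁ (0:ℝ)] 0) (𝓝 (α 0)) :=
            hcw.mono_left (nhdsWithin_mono 0
              (fun x hx => ⟨lt_trans ht₁.1 hx.1, lt_of_lt_of_le hx.2 (by linarith [ht₂.2])⟩))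
          have heq : ∀ᶠ s in 𝓝[Ioo t₁ (0:ℝ)] 0, α s = 0 := by
            filter_upwards [self_mem_nhdsWithin] with s hs
            exact hzero_ne s ⟨hs.1.le, le_trans hs.2.le ht.2⟩ (ne_of_lt hs.2)
          exact tendsto_nhds_unique hcont
            (tendsto_const_nhds.congr' (heq.mono fun s hs => hs.symm))
      · rcases mul_eq_zero.1 hk with h | h
        · exact h
        · exact absurd ((pow_eq_zero_iff ha.ne').1 h) htz
  · intro h0
    refine ⟨fun _ => 0, fun _ => 1, fun t ht => ?_⟩
    have hat := h0 t ht
    refine ⟨?_, ?_, ?_, ?_⟩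
    · have e : (fun s => Hbar 0 t s ((1:ℝ))) = fun s : ℝ => 1/2 * (s ^ 2 + 1) := by
        funext s; rw [hHbar]; simp
      show deriv (fun s => Hbar 0 t s 1) 0 = 0
      rw [e, derivHalfSqRight]
    · have e : (fun s => Hbar 0 t (0:ℝ) s) = fun s : ℝ => 1/2 * ((0:ℝ) + s ^ 2) := by
        funext s; rw [hHbar]; simp
      show deriv (fun s => Hbar 0 t 0 s) 1 = 1
      rw [e, derivHalfSqLeft]
    · show HasDerivWithinAt (fun _ : ℝ => (0:ℝ))
        (-(deriv (fun s => Hbar s t 0 1) 0)) (Icc t₁ t₂) t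
      have e : (fun s => Hbar s t (0:ℝ) (1:ℝ)) = fun _ : ℝ => (1/2 : ℝ) := by
        funext s; rw [hHbar, hat]; norm_num
      rw [e, deriv_const]
      simpa using hasDerivWithinAt_const t (Icc t₁ t₂) (0:ℝ)
    · show HasDerivWithinAt (fun _ : ℝ => (1:ℝ))
        (-(deriv (fun s => Hbar 0 s 0 1) t)) (Icc t₁ t₂) t
      have e : (fun s => Hbar 0 s (0:ℝ) (1:ℝ)) = fun _ : ℝ => (1/2 : ℝ) := by
        funext s; rw [hHbar]; simp
      rw [e, deriv_const]
      simpa using hasDerivWithinAt_const t (Icc t₁ t₂) (1:ℝ)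
end

section
/- Let a, b ∈ ℕ with b even and b ≤ 2a, let α : (-1,1) → [0,1] be smooth, and let ε ∈ (0, 1/16]. Let ω : [0,τ] → M be a horizontal curve parametrized by sub-Riemannian arc-length (ω₁'(t)² + φ(ω(t))ω₂'(t)² = 1 a.e.), with ω(0) = (0,−ε,0), ω(τ) = (0,ε,0), and |ω₁(t)| ≤ 8ε, |ω₂(t)| ≤ 8ε for all t ∈ [0,τ]. Assume moreover that for all t ∈ [0,τ]: 1 − (1/3)·α(ω₂(t))ω₁(t)ω₂(t)^a ≤ √(φ(ω(t))) ≤ 1 − (1/2)·α(ω₂(t))ω₁(t)ω₂(t)^a (which holds for ε small enough). Set β := max_{t∈[0,τ]} |ω₁(t)ω₂(t)^{b/2}|. Then ∫₀^τ ω₁(t)²ω₂(t)^b dt ≤ β²(τ − 2ε) + 2β³τ. -/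
open Set MeasureTheory

set_option maxHeartbeats 1000000

/-- Let `b` be even with `b ≤ 2a` and `ε ∈ (0, 1/16]`. Let
`ω : [0,τ] → M` be a horizontal curve parametrized by sub-Riemannian arc-length
(`u₁² + φ(ω)u₂² = 1` a.e., with controls `u₁ = ω₁'`, `u₂ = ω₂'` and
`φ(x) = 1 - α(x₂)x₁x₂^a`), joining `(0,-ε,0)` to `(0,ε,0)`, with `|ω₁|, |ω₂| ≤ 8ε` on
`[0,τ]`, and satisfying the Taylor bounds
`1 - ⅓α(ω₂)ω₁ω₂^a ≤ √(φ(ω)) ≤ 1 - ½α(ω₂)ω₁ω₂^a`. If `β = max_{[0,τ]} |ω₁ω₂^(b/2)|`,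
then `∫₀^τ ω₁²ω₂^b ≤ β²(τ - 2ε) + 2β³τ`. -/
theorem statement9 (a b : ℕ) (hbeven : Even b) (hba : b ≤ 2 * a)
    (α : ℝ → ℝ)
    (hα : ContDiffOn ℝ (⊤ : ℕ∞) α (Ioo (-1 : ℝ) 1))
    (hαr : ∀ s ∈ Ioo (-1 : ℝ) 1, α s ∈ Icc (0 : ℝ) 1)
    (ε : ℝ) (hε : ε ∈ Ioc (0 : ℝ) (1/16))
    (τ : ℝ) (hτ : 0 < τ)
    (ω₁ ω₂ ω₃ u₁ u₂ : ℝ → ℝ)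
    (hu₁ : IntervalIntegrable u₁ volume 0 τ)
    (hu₂ : IntervalIntegrable u₂ volume 0 τ)
    (hu₃ : IntervalIntegrable (fun s => (ω₁ s) ^ 2 * (ω₂ s) ^ b * u₂ s) volume 0 τ)
    (hmem : ∀ t ∈ Icc (0 : ℝ) τ,
      ω₁ t ∈ Ioo (-(1/2) : ℝ) (1/2) ∧ ω₂ t ∈ Ioo (-1 : ℝ) 1)
    (hrep₁ : ∀ t ∈ Icc (0 : ℝ) τ, ω₁ t = ω₁ 0 + ∫ s in (0 : ℝ)..t, u₁ s)
    (hrep₂ : ∀ t ∈ Icc (0 : ℝ) τ, ω₂ t = ω₂ 0 + ∫ s in (0 : ℝ)..t, u₂ s)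
    (hrep₃ : ∀ t ∈ Icc (0 : ℝ) τ,
      ω₃ t = ω₃ 0 + ∫ s in (0 : ℝ)..t, (ω₁ s) ^ 2 * (ω₂ s) ^ b * u₂ s)
    (h0 : ω₁ 0 = 0 ∧ ω₂ 0 = -ε ∧ ω₃ 0 = 0)
    (hτend : ω₁ τ = 0 ∧ ω₂ τ = ε ∧ ω₃ τ = 0)
    (harc : ∀ᵐ t : ℝ, t ∈ Icc (0 : ℝ) τ →
      (u₁ t) ^ 2 + (1 - α (ω₂ t) * ω₁ t * (ω₂ t) ^ a) * (u₂ t) ^ 2 = 1)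
    (hbd : ∀ t ∈ Icc (0 : ℝ) τ, |ω₁ t| ≤ 8 * ε ∧ |ω₂ t| ≤ 8 * ε)
    (hsqrt : ∀ t ∈ Icc (0 : ℝ) τ,
      1 - (1/3) * α (ω₂ t) * ω₁ t * (ω₂ t) ^ a ≤
        Real.sqrt (1 - α (ω₂ t) * ω₁ t * (ω₂ t) ^ a) ∧
      Real.sqrt (1 - α (ω₂ t) * ω₁ t * (ω₂ t) ^ a) ≤
        1 - (1/2) * α (ω₂ t) * ω₁ t * (ω₂ t) ^ a)
    (β : ℝ)
    (hβ : IsGreatest ((fun t => |ω₁ t * (ω₂ t) ^ (b / 2)|) '' Icc (0 : ℝ) τ) β) :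
    (∫ t in (0 : ℝ)..τ, (ω₁ t) ^ 2 * (ω₂ t) ^ b) ≤
      β ^ 2 * (τ - 2 * ε) + 2 * β ^ 3 * τ := by
  obtain ⟨hε0, hε16⟩ := hε
  have hτ0 : (0:ℝ) ≤ τ := hτ.le
  have h0mem : (0:ℝ) ∈ Icc (0:ℝ) τ := ⟨le_refl _, hτ0⟩
  have hτmem : τ ∈ Icc (0:ℝ) τ := ⟨hτ0, le_refl _⟩
  have hβ0 : 0 ≤ β := le_trans (abs_nonneg _) (hβ.2 ⟨0, h0mem, rfl⟩)
  -- β ≤ 1/2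
  have hβhalf : β ≤ 1/2 := by
    obtain ⟨t₀, ht₀, hβeq⟩ := hβ.1
    have hβeq' : |ω₁ t₀ * (ω₂ t₀) ^ (b/2)| = β := hβeq
    rw [← hβeq']
    have h1 := (hbd t₀ ht₀).1
    have hm2 := (hmem t₀ ht₀).2
    have habs2 : |ω₂ t₀| ≤ 1 := abs_le.mpr ⟨hm2.1.le, hm2.2.le⟩
    have hp : |ω₂ t₀| ^ (b/2) ≤ 1 := pow_le_one₀ (abs_nonneg _) habs2
    have : |ω₁ t₀ * (ω₂ t₀) ^ (b/2)| = |ω₁ t₀| * |ω₂ t₀| ^ (b/2) := by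
      rw [abs_mul, abs_pow]
    rw [this]
    nlinarith [abs_nonneg (ω₁ t₀), pow_nonneg (abs_nonneg (ω₂ t₀)) (b/2)]
  -- pointwise bounds on f := ω₁² ω₂^b
  obtain ⟨k, hk⟩ := hbeven
  have hfsq : ∀ t : ℝ, (ω₁ t) ^ 2 * (ω₂ t) ^ b = (ω₁ t * (ω₂ t) ^ (b/2)) ^ 2 := by
    intro t
    have hb2 : b / 2 = k := by omega
    rw [hb2, hk]; ring
  have hf0 : ∀ t ∈ Icc (0:ℝ) τ, 0 ≤ (ω₁ t) ^ 2 * (ω₂ t) ^ b := by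
    intro t _; rw [hfsq t]; positivity
  have hfle : ∀ t ∈ Icc (0:ℝ) τ, (ω₁ t) ^ 2 * (ω₂ t) ^ b ≤ β ^ 2 := by
    intro t ht
    have h1 : |ω₁ t * (ω₂ t) ^ (b/2)| ≤ β := hβ.2 ⟨t, ht, rfl⟩
    rw [hfsq t]
    nlinarith [abs_nonneg (ω₁ t * (ω₂ t) ^ (b/2)), sq_abs (ω₁ t * (ω₂ t) ^ (b/2))]
  -- continuity and integrability of f
  have hmem0 : (0:ℝ) ∈ uIcc (0:ℝ) τ := left_mem_uIcc
  have hu : uIcc (0:ℝ) τ = Icc (0:ℝ) τ := uIcc_of_le hτ0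
  have hω₁cont : ContinuousOn ω₁ (Icc (0:ℝ) τ) := by
    have hc : ContinuousOn (fun t => ω₁ 0 + ∫ s in (0:ℝ)..t, u₁ s) (Icc (0:ℝ) τ) := by
      have := intervalIntegral.continuousOn_primitive_interval' hu₁ hmem0
      rw [hu] at this
      exact continuousOn_const.add this
    exact hc.congr hrep₁
  have hω₂cont : ContinuousOn ω₂ (Icc (0:ℝ) τ) := by
    have hc : ContinuousOn (fun t => ω₂ 0 + ∫ s in (0:ℝ)..t, u₂ s) (Icc (0:ℝ) τ) := by
      have := intervalIntegral.continuousOn_primitive_interval' hu₂ hmem0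
      rw [hu] at this
      exact continuousOn_const.add this
    exact hc.congr hrep₂
  have hfint : IntervalIntegrable (fun t => (ω₁ t) ^ 2 * (ω₂ t) ^ b) volume 0 τ := by
    apply ContinuousOn.intervalIntegrable
    rw [hu]
    exact (hω₁cont.pow 2).mul (hω₂cont.pow b)
  -- endpoint identities
  have I₂ : (∫ s in (0:ℝ)..τ, u₂ s) = 2 * ε := by
    have h := hrep₂ τ hτmem
    rw [hτend.2.1, h0.2.1] at h
    linarith
  have I₃ : (∫ s in (0:ℝ)..τ, (ω₁ s) ^ 2 * (ω₂ s) ^ b * u₂ s) = 0 := by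
    have h := hrep₃ τ hτmem
    rw [hτend.2.2, h0.2.2] at h
    linarith
  -- a.e. bound on u₂
  have hu2bd : ∀ᵐ t : ℝ, t ∈ Icc (0:ℝ) τ → |u₂ t| ≤ 1 + 2 * β := by
    filter_upwards [harc] with t harct ht
    have harct := harct ht
    set θ := α (ω₂ t) * ω₁ t * (ω₂ t) ^ a with hθ
    -- θ ≤ β
    have hθβ : θ ≤ β := by
      obtain ⟨hm1, hm2⟩ := hmem t ht
      have hα01 := hαr (ω₂ t) hm2
      have habs2 : |ω₂ t| ≤ 1 := abs_le.mpr ⟨hm2.1.le, hm2.2.le⟩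
      have h1 : |ω₁ t * (ω₂ t) ^ (b/2)| ≤ β := hβ.2 ⟨t, ht, rfl⟩
      have hpow : |ω₂ t| ^ a ≤ |ω₂ t| ^ (b/2) :=
        pow_le_pow_of_le_one (abs_nonneg _) habs2 (by omega)
      have habs : |θ| = α (ω₂ t) * (|ω₁ t| * |ω₂ t| ^ a) := by
        rw [hθ, abs_mul, abs_mul, abs_pow, abs_of_nonneg hα01.1]; ring
      have h2 : α (ω₂ t) * (|ω₁ t| * |ω₂ t| ^ a) ≤ 1 * (|ω₁ t| * |ω₂ t| ^ (b/2)) := by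
        apply mul_le_mul hα01.2 _ (by positivity) one_pos.le
        exact mul_le_mul_of_nonneg_left hpow (abs_nonneg _)
      have h3 : (1:ℝ) * (|ω₁ t| * |ω₂ t| ^ (b/2)) = |ω₁ t * (ω₂ t) ^ (b/2)| := by
        rw [one_mul, abs_mul, abs_pow]
      calc θ ≤ |θ| := le_abs_self _
        _ = α (ω₂ t) * (|ω₁ t| * |ω₂ t| ^ a) := habs
        _ ≤ 1 * (|ω₁ t| * |ω₂ t| ^ (b/2)) := h2
        _ = |ω₁ t * (ω₂ t) ^ (b/2)| := h3
        _ ≤ β := h1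
    have hs := (hsqrt t ht).1
    have hs' : 1 - β/3 ≤ Real.sqrt (1 - θ) := by
      refine le_trans ?_ hs
      have heq : (1/3) * α (ω₂ t) * ω₁ t * (ω₂ t) ^ a = θ/3 := by rw [hθ]; ring
      linarith [heq]
    have h1θ : (0:ℝ) ≤ 1 - θ := by linarith
    have hsq : (1 - β/3) ^ 2 ≤ 1 - θ := by
      have hmono : (1 - β/3) ^ 2 ≤ (Real.sqrt (1 - θ)) ^ 2 :=
        pow_le_pow_left₀ (by linarith) hs' 2
      rwa [Real.sq_sqrt h1θ] at hmono
    have hu2sq : (1 - θ) * (u₂ t) ^ 2 ≤ 1 := by nlinarith [sq_nonneg (u₁ t)]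
    have h1 : (1 - β/3) ^ 2 * (u₂ t) ^ 2 ≤ 1 :=
      le_trans (mul_le_mul_of_nonneg_right hsq (sq_nonneg _)) hu2sq
    have hA : (1:ℝ) ≤ (1 - β/3) * (1 + 2*β) := by nlinarith
    have h2 : (1:ℝ) ≤ (1 - β/3) ^ 2 * (1 + 2*β) ^ 2 := by nlinarith [hA]
    have hpos : (0:ℝ) < (1 - β/3) ^ 2 := pow_pos (by linarith) 2
    have h2' : (1 - β/3) ^ 2 * (u₂ t) ^ 2 ≤ (1 - β/3) ^ 2 * (1 + 2*β) ^ 2 := by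
      calc (1 - β/3) ^ 2 * (u₂ t) ^ 2 ≤ 1 := h1
        _ ≤ (1 - β/3) ^ 2 * (1 + 2*β) ^ 2 := h2
    have hx2 : (u₂ t) ^ 2 ≤ (1 + 2*β) ^ 2 := le_of_mul_le_mul_left h2' hpos
    nlinarith [sq_abs (u₂ t), abs_nonneg (u₂ t)]
  -- main chain
  have hint1 : IntervalIntegrable (fun t => (β ^ 2 - (ω₁ t) ^ 2 * (ω₂ t) ^ b) * u₂ t)
      volume 0 τ := by
    have : (fun t => (β ^ 2 - (ω₁ t) ^ 2 * (ω₂ t) ^ b) * u₂ t)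
        = fun t => β ^ 2 * u₂ t - (ω₁ t) ^ 2 * (ω₂ t) ^ b * u₂ t := by
      funext t; ring
    rw [this]
    exact (hu₂.const_mul _).sub hu₃
  have hint2 : IntervalIntegrable (fun t => (β ^ 2 - (ω₁ t) ^ 2 * (ω₂ t) ^ b) * (1 + 2*β))
      volume 0 τ :=
    (intervalIntegrable_const.sub hfint).mul_const _
  have step1 : (∫ t in (0:ℝ)..τ, (β ^ 2 - (ω₁ t) ^ 2 * (ω₂ t) ^ b) * u₂ t) = 2 * ε * β ^ 2 := by
    have heq : (fun t => (β ^ 2 - (ω₁ t) ^ 2 * (ω₂ t) ^ b) * u₂ t)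
        = fun t => β ^ 2 * u₂ t - (ω₁ t) ^ 2 * (ω₂ t) ^ b * u₂ t := by
      funext t; ring
    rw [heq, intervalIntegral.integral_sub (hu₂.const_mul _) hu₃,
      intervalIntegral.integral_const_mul, I₂, I₃]
    ring
  have step2 : (∫ t in (0:ℝ)..τ, (β ^ 2 - (ω₁ t) ^ 2 * (ω₂ t) ^ b) * u₂ t)
      ≤ ∫ t in (0:ℝ)..τ, (β ^ 2 - (ω₁ t) ^ 2 * (ω₂ t) ^ b) * (1 + 2*β) := by
    apply intervalIntegral.integral_mono_ae_restrict hτ0 hint1 hint2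
    have hmemae : ∀ᵐ t ∂(volume.restrict (Icc (0:ℝ) τ)), t ∈ Icc (0:ℝ) τ :=
      ae_restrict_mem measurableSet_Icc
    filter_upwards [hmemae, ae_restrict_of_ae hu2bd] with t ht hb'
    have hb' := hb' ht
    have hnn : 0 ≤ β ^ 2 - (ω₁ t) ^ 2 * (ω₂ t) ^ b := by linarith [hfle t ht]
    have : u₂ t ≤ 1 + 2*β := le_trans (le_abs_self _) hb'
    exact mul_le_mul_of_nonneg_left this hnn
  have step3 : (∫ t in (0:ℝ)..τ, (β ^ 2 - (ω₁ t) ^ 2 * (ω₂ t) ^ b) * (1 + 2*β))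
      = (β ^ 2 * τ - (∫ t in (0:ℝ)..τ, (ω₁ t) ^ 2 * (ω₂ t) ^ b)) * (1 + 2*β) := by
    rw [intervalIntegral.integral_mul_const,
      intervalIntegral.integral_sub intervalIntegrable_const hfint,
      intervalIntegral.integral_const, smul_eq_mul]
    ring
  have hF0 : 0 ≤ ∫ t in (0:ℝ)..τ, (ω₁ t) ^ 2 * (ω₂ t) ^ b :=
    intervalIntegral.integral_nonneg hτ0 hf0
  set F := ∫ t in (0:ℝ)..τ, (ω₁ t) ^ 2 * (ω₂ t) ^ b with hFdef
  have hkey : 2 * ε * β ^ 2 ≤ (β ^ 2 * τ - F) * (1 + 2*β) := by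
    rw [← step1, ← step3]; exact step2
  nlinarith [mul_nonneg hβ0 hF0]
end

section
/- Let a ∈ ℕ with a ≥ 1 and let c > 0. Then there exists ρ₀ ∈ (0,1) such that for every ρ ∈ (0,ρ₀), setting h := ρ^{a+2+c} and defining the plane curve κ : [0,2] → ℝ² by κ(t) := (th, tρ) for t ∈ [0,1] and κ(t) := ((2−t)h, tρ) for t ∈ [1,2], the sub-Riemannian length L(κ) = ∫₀¹ √(h² + (1 − (th)(tρ)^a)ρ²) dt + ∫₁² √(h² + (1 − (2−t)h·(tρ)^a)ρ²) dt satisfies L(κ) ≤ 2ρ − (1/8)·h·ρ^{a+1}. -/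
open Set Real

set_option maxHeartbeats 1000000

/-- Let `a ≥ 1` and `c > 0`. There is `ρ₀ ∈ (0,1)` such that for all
`ρ ∈ (0,ρ₀)`, setting `h = ρ^(a+2+c)` (a real power), the sub-Riemannian length of the
cut `κ(t) = (th, tρ)` for `t ∈ [0,1]`, `κ(t) = ((2-t)h, tρ)` for `t ∈ [1,2]`, namely
`L(κ) = ∫₀¹ √(h² + (1 - (th)(tρ)^a)ρ²) dt + ∫₁² √(h² + (1 - (2-t)h(tρ)^a)ρ²) dt`,
satisfies `L(κ) ≤ 2ρ - (1/8)hρ^(a+1)`. -/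
theorem statement12 (a : ℕ) (ha : 1 ≤ a) (c : ℝ) (hc : 0 < c) :
    ∃ ρ₀ : ℝ, 0 < ρ₀ ∧ ρ₀ < 1 ∧
      ∀ ρ : ℝ, 0 < ρ → ρ < ρ₀ →
        (∫ t in (0 : ℝ)..1,
            Real.sqrt ((ρ ^ ((a : ℝ) + 2 + c)) ^ 2 +
              (1 - (t * ρ ^ ((a : ℝ) + 2 + c)) * (t * ρ) ^ a) * ρ ^ 2)) +
        (∫ t in (1 : ℝ)..2,
            Real.sqrt ((ρ ^ ((a : ℝ) + 2 + c)) ^ 2 +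
              (1 - ((2 - t) * ρ ^ ((a : ℝ) + 2 + c)) * (t * ρ) ^ a) * ρ ^ 2))
        ≤ 2 * ρ - (1/8) * ρ ^ ((a : ℝ) + 2 + c) * ρ ^ (a + 1) := by
  refine ⟨min (1/2) ((1/8 : ℝ) ^ (1/c)), lt_min (by norm_num)
    (Real.rpow_pos_of_pos (by norm_num) _), lt_of_le_of_lt (min_le_left _ _) (by norm_num),
    fun ρ hρ0 hρρ₀ => ?_⟩
  have hρhalf : ρ < 1/2 := lt_of_lt_of_le hρρ₀ (min_le_left _ _)
  have hρ1 : ρ ≤ 1 := by linarith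
  -- ρ^c ≤ 1/8
  have hρc : ρ ^ c ≤ (1/8 : ℝ) := by
    have h1 : ρ ≤ (1/8 : ℝ) ^ (1/c) := le_of_lt (lt_of_lt_of_le hρρ₀ (min_le_right _ _))
    calc ρ ^ c ≤ ((1/8 : ℝ) ^ (1/c)) ^ c :=
          Real.rpow_le_rpow hρ0.le h1 hc.le
      _ = (1/8 : ℝ) := by
          rw [← Real.rpow_mul (by norm_num : (0:ℝ) ≤ 1/8),
            one_div_mul_cancel hc.ne', Real.rpow_one]
  set h : ℝ := ρ ^ ((a : ℝ) + 2 + c) with hh_def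
  have hh0 : 0 < h := Real.rpow_pos_of_pos hρ0 _
  have hsplit : h = ρ ^ (a + 2) * ρ ^ c := by
    rw [hh_def, Real.rpow_add hρ0]
    congr 1
    rw [← Real.rpow_natCast ρ (a + 2)]
    push_cast
    ring_nf
  have hh8 : h ≤ (1/8) * ρ ^ (a + 2) := by
    rw [hsplit]
    calc ρ ^ (a + 2) * ρ ^ c ≤ ρ ^ (a + 2) * (1/8) :=
          mul_le_mul_of_nonneg_left hρc (by positivity)
      _ = (1/8) * ρ ^ (a + 2) := by ring
  have hpow1 : ρ ^ (a + 2) ≤ 1 := pow_le_one₀ hρ0.le hρ1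
  have hpowa1 : ρ ^ a ≤ 1 := pow_le_one₀ hρ0.le hρ1
  have hhρa : h * ρ ^ a ≤ 1 := by nlinarith [pow_nonneg hρ0.le a, pow_nonneg hρ0.le (a+2)]
  -- the auxiliary quantity E = h²/(2ρ)
  set E : ℝ := h ^ 2 / (2 * ρ) with hE_def
  have hE0 : 0 ≤ E := by positivity
  have hE : h ^ 2 = 2 * ρ * E := by rw [hE_def]; field_simp
  set C : ℝ := ρ + E with hC_def
  set D : ℝ := (ρ / 2) * (h * ρ ^ a) with hD_def
  have hD0 : 0 ≤ D := by positivity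
  -- First integral ≤ C
  have hI1 : (∫ t in (0 : ℝ)..1,
      Real.sqrt ((ρ ^ ((a : ℝ) + 2 + c)) ^ 2 +
        (1 - (t * ρ ^ ((a : ℝ) + 2 + c)) * (t * ρ) ^ a) * ρ ^ 2)) ≤ C := by
    have hmono : (∫ t in (0 : ℝ)..1,
        Real.sqrt (h ^ 2 + (1 - (t * h) * (t * ρ) ^ a) * ρ ^ 2)) ≤
        ∫ _t in (0 : ℝ)..1, C := by
      apply intervalIntegral.integral_mono_on (by norm_num)
      · apply Continuous.intervalIntegrable
        fun_prop
      · exact intervalIntegrable_const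
      · intro t ht
        obtain ⟨ht0, ht1⟩ := ht
        have hs0 : 0 ≤ (t * h) * (t * ρ) ^ a := by positivity
        have hin : h ^ 2 + (1 - (t * h) * (t * ρ) ^ a) * ρ ^ 2 ≤ C ^ 2 := by
          rw [hC_def]
          nlinarith [sq_nonneg E, mul_nonneg hs0 (sq_nonneg ρ)]
        have hC0 : 0 ≤ C := by rw [hC_def]; linarith
        calc Real.sqrt (h ^ 2 + (1 - (t * h) * (t * ρ) ^ a) * ρ ^ 2)
            ≤ Real.sqrt (C ^ 2) := Real.sqrt_le_sqrt hin
          _ = C := Real.sqrt_sq hC0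
    rw [intervalIntegral.integral_const] at hmono
    simpa using hmono
  -- Second integral ≤ C - D/2
  have hI2 : (∫ t in (1 : ℝ)..2,
      Real.sqrt ((ρ ^ ((a : ℝ) + 2 + c)) ^ 2 +
        (1 - ((2 - t) * ρ ^ ((a : ℝ) + 2 + c)) * (t * ρ) ^ a) * ρ ^ 2)) ≤ C - D / 2 := by
    have hmono : (∫ t in (1 : ℝ)..2,
        Real.sqrt (h ^ 2 + (1 - ((2 - t) * h) * (t * ρ) ^ a) * ρ ^ 2)) ≤
        ∫ t in (1 : ℝ)..2, (C - D * (2 - t)) := by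
      apply intervalIntegral.integral_mono_on (by norm_num)
      · apply Continuous.intervalIntegrable
        fun_prop
      · apply Continuous.intervalIntegrable
        fun_prop
      · intro t ht
        obtain ⟨ht1, ht2⟩ := ht
        have hta : ρ ^ a ≤ (t * ρ) ^ a := by
          apply pow_le_pow_left₀ hρ0.le
          nlinarith
        have hs' : ((2 - t) * h) * ρ ^ a ≤ ((2 - t) * h) * (t * ρ) ^ a :=
          mul_le_mul_of_nonneg_left hta (by nlinarith)
        have hRHS0 : 0 ≤ C - D * (2 - t) := by
          rw [hC_def, hD_def]
          nlinarith
        have hin : h ^ 2 + (1 - ((2 - t) * h) * (t * ρ) ^ a) * ρ ^ 2 ≤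
            (C - D * (2 - t)) ^ 2 := by
          have key : h ^ 2 + (1 - ((2 - t) * h) * ρ ^ a) * ρ ^ 2 ≤
              (C - D * (2 - t)) ^ 2 := by
            rw [hC_def, hD_def]
            nlinarith [sq_nonneg (E - (ρ / 2) * ((2 - t) * h * ρ ^ a))]
          nlinarith [sq_nonneg ρ]
        calc Real.sqrt (h ^ 2 + (1 - ((2 - t) * h) * (t * ρ) ^ a) * ρ ^ 2)
            ≤ Real.sqrt ((C - D * (2 - t)) ^ 2) := Real.sqrt_le_sqrt hin
          _ = C - D * (2 - t) := Real.sqrt_sq hRHS0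
    have hcomp : (∫ t in (1 : ℝ)..2, (C - D * (2 - t))) = C - D / 2 := by
      have heq : ∀ t : ℝ, C - D * (2 - t) = (C - 2 * D) + D * t := by intro t; ring
      simp_rw [heq]
      rw [intervalIntegral.integral_add intervalIntegrable_const
        ((continuous_mul_left D).intervalIntegrable _ _),
        intervalIntegral.integral_const, intervalIntegral.integral_const_mul,
        integral_id]
      norm_num
      ring
    rw [hcomp] at hmono
    exact hmono
  -- combine
  have hfinal : C + (C - D / 2) ≤ 2 * ρ - (1/8) * h * ρ ^ (a + 1) := by
    rw [hC_def, hD_def, hE_def]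
    have hρa2 : ρ ^ (a + 2) = ρ ^ (a + 1) * ρ := by ring
    have h1 : h ^ 2 / (2 * ρ) ≤ (1/16) * h * ρ ^ (a + 1) := by
      rw [div_le_iff₀ (by positivity)]
      nlinarith [hh0.le]
    have h3 : ρ / 2 * (h * ρ ^ a) / 2 = (1/4) * h * ρ ^ (a + 1) := by
      rw [pow_succ]; ring
    linarith
  calc _ ≤ C + (C - D / 2) := add_le_add hI1 hI2
    _ ≤ _ := hfinal
end
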